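/- arXiv:2301.10685 — 8 statements merged into one kernel-verified Lean document; each statement's English description precedes it below -/
import Mathlib

section
/- Let E be the upper triangular r×r integer matrix with E_{j,k} = ε_j for j ≤ k and E_{j,k} = 0 otherwise, and let C be the companion matrix of α(x) = x^r + ε_r x^{r−1} + ⋯ + ε_2 x + ε_1, i.e. C_{i+1,i} = 1 for 1 ≤ i ≤ r−1, C_{i,r} = −ε_i for 1 ≤ i ≤ r, and all other entries of C are 0. Then E·T = Id − C. Consequently det T = (ε_1 ε_2 ⋯ ε_r)·(1 + ε_1 + ε_2 + ⋯ + ε_r). -/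
/-- `ε_j = (−1)^{#({j,…,r} ∩ J)}` for `1 ≤ j ≤ r+1` (so `ε_{r+1} = 1`). -/
def epsSign (r : ℕ) (J : Finset ℕ) (j : ℕ) : ℤ :=
  (-1) ^ ((Finset.Icc j r ∩ J).card)

/-- The defining conditions of the symmetric tridiagonal `r×r` integer matrix `T(r,J)`
of type Super A, with indices running through `1,…,r`. -/
def IsSuperAMatrix (r : ℕ) (J : Finset ℕ) (T : ℕ → ℕ → ℤ) : Prop :=
  (if r ∈ J then T (r - 1) r = 1 else T (r - 1) r = -1) ∧
  (∀ i, 2 ≤ i → i ≤ r - 1 →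
    (i ∈ J → T (i - 1) i = -T i (i + 1)) ∧ (i ∉ J → T (i - 1) i = T i (i + 1))) ∧
  (∀ i, 1 ≤ i → i ≤ r → i ∈ J → T i i = 0) ∧
  (∀ i, 1 ≤ i → i < r → i ∉ J → T i i = -2 * T i (i + 1)) ∧
  (r ∉ J → T r r = 2) ∧
  (∀ i j, 1 ≤ i → i ≤ r → 1 ≤ j → j ≤ r → T j i = T i j) ∧
  (∀ i j, 1 ≤ i → i ≤ r → 1 ≤ j → j ≤ r → (i + 2 ≤ j ∨ j + 2 ≤ i) → T i j = 0)

namespace SuperAAux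

lemma eps_top (r : ℕ) (J : Finset ℕ) : epsSign r J (r+1) = 1 := by
  simp [epsSign, Finset.Icc_eq_empty (by omega : ¬ r + 1 ≤ r)]

lemma eps_step (r : ℕ) (J : Finset ℕ) (j : ℕ) (hj : j ≤ r) :
    epsSign r J j = (if j ∈ J then -1 else 1) * epsSign r J (j+1) := by
  have hins : Finset.Icc j r = insert j (Finset.Icc (j+1) r) := by
    ext x; simp [Finset.mem_Icc, Finset.mem_insert]; omega
  rw [epsSign, epsSign, hins]
  by_cases h : j ∈ J
  · rw [Finset.insert_inter_of_mem h,
      Finset.card_insert_of_notMem (by simp [Finset.mem_Icc])]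
    rw [if_pos h, pow_succ]; ring
  · rw [Finset.insert_inter_of_notMem h]; simp [h]

lemma eps_sq (r : ℕ) (J : Finset ℕ) (j : ℕ) :
    epsSign r J j * epsSign r J j = 1 := by
  rw [epsSign, ← pow_add]
  exact Even.neg_one_pow ⟨_, rfl⟩

lemma sum_ite_le (r a : ℕ) (g : ℕ → ℤ) :
    (∑ k : Fin r, if a ≤ k.1 then g k.1 else 0) = ∑ k ∈ Finset.Ico a r, g k := by
  rw [Fin.sum_univ_eq_sum_range (fun n => if a ≤ n then g n else 0) r, ← Finset.sum_filter]
  congr 1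
  ext x
  simp only [Finset.mem_filter, Finset.mem_range, Finset.mem_Ico]
  omega

lemma sum_ite_ge (r a : ℕ) (ha : a < r) (g : ℕ → ℤ) :
    (∑ k : Fin r, if k.1 ≤ a then g k.1 else 0) = ∑ k ∈ Finset.range (a+1), g k := by
  rw [Fin.sum_univ_eq_sum_range (fun n => if n ≤ a then g n else 0) r, ← Finset.sum_filter]
  congr 1
  ext x
  simp only [Finset.mem_filter, Finset.mem_range]
  omega

lemma sum_shift (n : ℕ) (g : ℕ → ℤ) :
    ∑ k ∈ Finset.range n, g (k+1) = ∑ m ∈ Finset.Icc 1 n, g m := by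
  induction n with
  | zero => simp
  | succ n ih =>
    rw [Finset.sum_range_succ, ih,
      show Finset.Icc 1 (n+1) = insert (n+1) (Finset.Icc 1 n) from by
        ext x; simp [Finset.mem_Icc, Finset.mem_insert]; omega,
      Finset.sum_insert (by simp [Finset.mem_Icc])]
    ring

lemma prod_shift (n : ℕ) (g : ℕ → ℤ) :
    ∏ k ∈ Finset.range n, g (k+1) = ∏ m ∈ Finset.Icc 1 n, g m := by
  induction n with
  | zero => simp
  | succ n ih =>
    rw [Finset.prod_range_succ, ih,
      show Finset.Icc 1 (n+1) = insert (n+1) (Finset.Icc 1 n) from by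
        ext x; simp [Finset.mem_Icc, Finset.mem_insert]; omega,
      Finset.prod_insert (by simp [Finset.mem_Icc])]
    ring

end SuperAAux

open SuperAAux in
/-- With `E` the upper triangular matrix with `E_{j,k} = ε_j` for `j ≤ k`, and `C` the
companion matrix of `α(x) = x^r + ε_r x^{r−1} + ⋯ + ε_2 x + ε_1`, one has `E·T = Id − C`,
and consequently `det T = (ε_1 ε_2 ⋯ ε_r)·(1 + ε_1 + ε_2 + ⋯ + ε_r)`.
(Matrices are written with `0`-based `Fin r` indices via the shift `i ↦ i+1`.) -/
theorem superA_ET_eq_id_sub_companion (r : ℕ) (hr : 2 ≤ r) (J : Finset ℕ)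
    (hJ : J ⊆ Finset.Icc 1 r) (hJne : J.Nonempty)
    (T : ℕ → ℕ → ℤ) (hT : IsSuperAMatrix r J T)
    (Tm E C : Matrix (Fin r) (Fin r) ℤ)
    (hTm : Tm = Matrix.of fun (i j : Fin r) => T (i.1 + 1) (j.1 + 1))
    (hE : E = Matrix.of fun (i j : Fin r) => if i ≤ j then epsSign r J (i.1 + 1) else 0)
    (hC : C = Matrix.of fun (i j : Fin r) =>
      (if i.1 = j.1 + 1 then 1 else 0) + (if j.1 = r - 1 then -epsSign r J (i.1 + 1) else 0)) :
    E * Tm = 1 - C ∧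
    Tm.det = (∏ j ∈ Finset.Icc 1 r, epsSign r J j) *
      (1 + ∑ j ∈ Finset.Icc 1 r, epsSign r J j) := by
  obtain ⟨h1, h2, h3, h4, h5, hsym, hz⟩ := hT
  -- the superdiagonal entries
  have hb : ∀ i, 1 ≤ i → i ≤ r - 1 → T i (i+1) = -epsSign r J (i+1) := by
    have key : ∀ d i, 1 ≤ i → i + d = r - 1 → T i (i+1) = -epsSign r J (i+1) := by
      intro d
      induction d with
      | zero =>
        intro i hi1 hid
        have hir : i = r - 1 := by omega
        subst hir
        rw [show r - 1 + 1 = r from by omega]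
        by_cases hJr : r ∈ J
        · rw [if_pos hJr] at h1
          rw [h1, eps_step r J r le_rfl, if_pos hJr, eps_top]; ring
        · rw [if_neg hJr] at h1
          rw [h1, eps_step r J r le_rfl, if_neg hJr, eps_top]; ring
      | succ d ih =>
        intro i hi1 hid
        obtain ⟨hmem, hnmem⟩ := h2 (i+1) (by omega) (by omega)
        simp only [Nat.add_sub_cancel] at hmem hnmem
        have hstep := eps_step r J (i+1) (by omega)
        have hIH := ih (i+1) (by omega) (by omega)
        by_cases hJm : (i+1) ∈ J
        · rw [if_pos hJm] at hstep
          rw [hmem hJm, hIH, hstep]; ring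
        · rw [if_neg hJm] at hstep
          rw [hnmem hJm, hIH, hstep]; ring
    intro i hi1 hi2
    exact key (r - 1 - i) i hi1 (by omega)
  have hb' : ∀ i k, 1 ≤ i → i ≤ r - 1 → k = i + 1 → T i k = -epsSign r J k := by
    intro i k h1' h2' hk; subst hk; exact hb i h1' h2'
  have hbl : ∀ i k, 1 ≤ k → k ≤ r - 1 → i = k + 1 → T i k = -epsSign r J i := by
    intro i k h1' h2' hk; subst hk
    rw [hsym k (k+1) (by omega) (by omega) (by omega) (by omega)]
    exact hb k h1' h2'
  -- the diagonal entries
  have hdiag : ∀ i, 1 ≤ i → i ≤ r → T i i = epsSign r J i + epsSign r J (i+1) := by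
    intro i hi1 hi2
    have hstep := eps_step r J i (by omega)
    by_cases hJm : i ∈ J
    · rw [if_pos hJm] at hstep
      rw [h3 i hi1 hi2 hJm, hstep]; ring
    · rw [if_neg hJm] at hstep
      rcases Nat.lt_or_ge i r with hir | hir
      · rw [h4 i hi1 hir hJm, hb i hi1 (by omega), hstep]; ring
      · have : i = r := by omega
        subst this
        rw [h5 hJm, hstep, eps_top]; ring
  -- tail sums of the columns
  have htail : ∀ c, 1 ≤ c → c ≤ r → ∀ d a, a + d = r →
      (∑ k ∈ Finset.Ico a r, T (k+1) c) =
        if a + 2 ≤ c then (if c = r then 1 else 0)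
        else if a + 1 = c then (if c = r then epsSign r J c + 1 else epsSign r J c)
        else if a = c then (if c = r then 0 else -epsSign r J (c+1))
        else 0 := by
    intro c hc1 hcr d
    induction d with
    | zero =>
      intro a ha
      have : a = r := by omega
      subst this
      rw [Finset.Ico_self, Finset.sum_empty, if_neg (by omega), if_neg (by omega)]
      split_ifs with hh1 hh2 <;> first | rfl | omega
    | succ d ih =>
      intro a ha
      rw [Finset.sum_eq_sum_Ico_succ_bot (by omega : a < r), ih (a+1) (by omega)]
      by_cases hA : a + 2 < c
      · rw [hz (a+1) c (by omega) (by omega) hc1 hcr (Or.inl (by omega)),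
          if_pos (show a+1+2 ≤ c by omega), if_pos (show a+2 ≤ c by omega), zero_add]
      by_cases hB : a + 2 = c
      · rw [hb' (a+1) c (by omega) (by omega) (by omega),
          if_neg (show ¬ a+1+2 ≤ c by omega), if_pos (show a+1+1 = c by omega),
          if_pos (show a+2 ≤ c by omega)]
        split_ifs <;> ring
      by_cases hCc : a + 1 = c
      · rw [show T (a+1) c = epsSign r J c + epsSign r J (c+1) from by
            rw [hCc]; exact hdiag c hc1 hcr,
          if_neg (show ¬ a+1+2 ≤ c by omega), if_neg (show ¬ a+1+1 = c by omega),
          if_pos (show a+1 = c from hCc), if_neg (show ¬ a+2 ≤ c by omega),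
          if_pos (show a+1 = c from hCc)]
        split_ifs with hcr'
        · rw [hcr', eps_top]; ring
        · ring
      by_cases hD : a = c
      · rw [hbl (a+1) c hc1 (by omega) (by omega),
          if_neg (show ¬ a+1+2 ≤ c by omega), if_neg (show ¬ a+1+1 = c by omega),
          if_neg (show ¬ a+1 = c by omega), if_neg (show ¬ a+2 ≤ c by omega),
          if_neg (show ¬ a+1 = c by omega), if_pos hD, if_neg (show ¬ c = r by omega),
          show a + 1 = c + 1 from by omega]
        ring
      · rw [hz (a+1) c (by omega) (by omega) hc1 hcr (Or.inr (by omega)),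
          if_neg (show ¬ a+1+2 ≤ c by omega), if_neg (show ¬ a+1+1 = c by omega),
          if_neg (show ¬ a+1 = c by omega), if_neg (show ¬ a+2 ≤ c by omega),
          if_neg (show ¬ a+1 = c by omega), if_neg hD]
        ring
  have part1 : E * Tm = 1 - C := by
    subst hTm hE hC
    ext i j
    obtain ⟨iv, hiv⟩ := i
    obtain ⟨jv, hjv⟩ := j
    rw [Matrix.mul_apply]
    simp only [Matrix.of_apply, Matrix.sub_apply, Matrix.one_apply, Fin.mk.injEq]
    rw [show (∑ k : Fin r, (if (⟨iv, hiv⟩ : Fin r) ≤ k then epsSign r J (iv + 1) else 0) *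
          T (k.1 + 1) (jv + 1))
        = ∑ k : Fin r, (if iv ≤ k.1 then epsSign r J (iv + 1) * T (k.1 + 1) (jv + 1) else 0) from
      Finset.sum_congr rfl fun k _ => by
        by_cases hk : iv ≤ k.1
        · rw [if_pos (show (⟨iv, hiv⟩ : Fin r) ≤ k from hk), if_pos hk]
        · rw [if_neg (show ¬ (⟨iv, hiv⟩ : Fin r) ≤ k from hk), if_neg hk, zero_mul]]
    rw [sum_ite_le r iv (fun k => epsSign r J (iv+1) * T (k+1) (jv+1)), ← Finset.mul_sum,
      htail (jv+1) (by omega) (by omega) (r - iv) iv (by omega)]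
    rcases Nat.lt_trichotomy iv jv with hlt | heq | hgt
    · rw [if_pos (show iv+2 ≤ jv+1 by omega), if_neg (show ¬ iv = jv by omega),
        if_neg (show ¬ iv = jv+1 by omega)]
      by_cases hjr : jv + 1 = r
      · rw [if_pos hjr, if_pos (show jv = r-1 by omega)]; ring
      · rw [if_neg hjr, if_neg (show ¬ jv = r-1 by omega)]; ring
    · subst heq
      rw [if_neg (show ¬ iv+2 ≤ iv+1 by omega), if_pos rfl, if_pos rfl,
        if_neg (show ¬ iv = iv+1 by omega)]
      have hsq := eps_sq r J (iv+1)
      by_cases hjr : iv + 1 = r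
      · rw [if_pos hjr, if_pos (show iv = r-1 by omega)]; linear_combination hsq
      · rw [if_neg hjr, if_neg (show ¬ iv = r-1 by omega)]; linear_combination hsq
    · by_cases hD : iv = jv + 1
      · subst hD
        rw [if_neg (show ¬ jv+1+2 ≤ jv+1 by omega), if_neg (show ¬ jv+1+1 = jv+1 by omega),
          if_pos rfl, if_neg (show ¬ jv+1 = r by omega), if_neg (show ¬ jv+1 = jv by omega),
          if_pos rfl, if_neg (show ¬ jv = r-1 by omega)]
        have hsq := eps_sq r J (jv+1+1)
        linear_combination (-1 : ℤ) * hsq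
      · rw [if_neg (show ¬ iv+2 ≤ jv+1 by omega), if_neg (show ¬ iv+1 = jv+1 by omega),
          if_neg hD, if_neg (show ¬ iv = jv by omega), if_neg hD,
          if_neg (show ¬ jv = r-1 by omega)]
        ring
  refine ⟨part1, ?_⟩
  set F : Matrix (Fin r) (Fin r) ℤ := Matrix.of fun i j => if j ≤ i then 1 else 0 with hF
  set U : Matrix (Fin r) (Fin r) ℤ := Matrix.of fun i j =>
    if j.1 = r - 1 then
      ((if i.1 = r - 1 then (1:ℤ) else 0) + ∑ m ∈ Finset.Icc 1 (i.1+1), epsSign r J m)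
    else (if i.1 = j.1 then 1 else 0) with hU
  have hFC : F * (1 - C) = U := by
    subst hC
    ext i j
    obtain ⟨iv, hiv⟩ := i
    obtain ⟨jv, hjv⟩ := j
    rw [Matrix.mul_apply, hF, hU]
    simp only [Matrix.of_apply, Matrix.sub_apply, Matrix.one_apply]
    by_cases hjr : jv = r - 1
    · rw [show (∑ k : Fin r, (if k ≤ (⟨iv, hiv⟩ : Fin r) then (1:ℤ) else 0) *
            ((if k = ⟨jv, hjv⟩ then 1 else 0) -
              ((if k.1 = jv + 1 then 1 else 0) + (if jv = r - 1 then -epsSign r J (k.1 + 1) else 0))))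
          = ∑ k : Fin r, (if k.1 ≤ iv then
              ((if k.1 = jv then 1 else 0) - ((if k.1 = jv + 1 then 1 else 0) +
                (-epsSign r J (k.1 + 1)))) else 0) from
        Finset.sum_congr rfl fun k _ => by
          by_cases hk : k.1 ≤ iv
          · rw [if_pos (show k ≤ (⟨iv, hiv⟩ : Fin r) from hk), one_mul, if_pos hjr, if_pos hk]
            by_cases hkj : k.1 = jv
            · rw [if_pos (show k = ⟨jv, hjv⟩ from Fin.ext hkj), if_pos hkj]
            · rw [if_neg (show ¬ k = ⟨jv, hjv⟩ from fun h => hkj (congrArg Fin.val h)),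
                if_neg hkj]
          · rw [if_neg (show ¬ k ≤ (⟨iv, hiv⟩ : Fin r) from hk), if_neg hk, zero_mul]]
      rw [sum_ite_ge r iv hiv
        (fun n => (if n = jv then 1 else 0) - ((if n = jv + 1 then 1 else 0) +
          (-epsSign r J (n + 1))))]
      rw [Finset.sum_sub_distrib, Finset.sum_add_distrib, Finset.sum_ite_eq' _ jv (fun _ => (1:ℤ)),
        Finset.sum_ite_eq' _ (jv+1) (fun _ => (1:ℤ)), Finset.sum_neg_distrib,
        sum_shift (iv+1) (epsSign r J)]
      rw [if_neg (show jv + 1 ∉ Finset.range (iv+1) from by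
        simp only [Finset.mem_range]; omega)]
      rw [if_pos hjr]
      by_cases hir : iv = r - 1
      · rw [if_pos (show jv ∈ Finset.range (iv+1) from by
          simp only [Finset.mem_range]; omega), if_pos hir]
        ring
      · rw [if_neg (show jv ∉ Finset.range (iv+1) from by
          simp only [Finset.mem_range]; omega), if_neg hir]
        ring
    · rw [show (∑ k : Fin r, (if k ≤ (⟨iv, hiv⟩ : Fin r) then (1:ℤ) else 0) *
            ((if k = ⟨jv, hjv⟩ then 1 else 0) -
              ((if k.1 = jv + 1 then 1 else 0) + (if jv = r - 1 then -epsSign r J (k.1 + 1) else 0))))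
          = ∑ k : Fin r, (if k.1 ≤ iv then
              ((if k.1 = jv then 1 else 0) - ((if k.1 = jv + 1 then 1 else 0) + 0)) else 0) from
        Finset.sum_congr rfl fun k _ => by
          by_cases hk : k.1 ≤ iv
          · rw [if_pos (show k ≤ (⟨iv, hiv⟩ : Fin r) from hk), one_mul, if_neg hjr, if_pos hk]
            by_cases hkj : k.1 = jv
            · rw [if_pos (show k = ⟨jv, hjv⟩ from Fin.ext hkj), if_pos hkj]
            · rw [if_neg (show ¬ k = ⟨jv, hjv⟩ from fun h => hkj (congrArg Fin.val h)),
                if_neg hkj]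
          · rw [if_neg (show ¬ k ≤ (⟨iv, hiv⟩ : Fin r) from hk), if_neg hk, zero_mul]]
      rw [sum_ite_ge r iv hiv
        (fun n => (if n = jv then 1 else 0) - ((if n = jv + 1 then 1 else 0) + 0))]
      rw [Finset.sum_sub_distrib, Finset.sum_add_distrib, Finset.sum_ite_eq' _ jv (fun _ => (1:ℤ)),
        Finset.sum_ite_eq' _ (jv+1) (fun _ => (1:ℤ)), Finset.sum_const, if_neg hjr]
      rcases Nat.lt_trichotomy iv jv with h | h | h
      · rw [if_neg (show jv ∉ Finset.range (iv+1) from by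
          simp only [Finset.mem_range]; omega), if_neg (show jv+1 ∉ Finset.range (iv+1) from by
          simp only [Finset.mem_range]; omega), if_neg (show ¬ iv = jv by omega)]
        simp
      · rw [if_pos (show jv ∈ Finset.range (iv+1) from by
          simp only [Finset.mem_range]; omega), if_neg (show jv+1 ∉ Finset.range (iv+1) from by
          simp only [Finset.mem_range]; omega), if_pos h]
        simp
      · rw [if_pos (show jv ∈ Finset.range (iv+1) from by
          simp only [Finset.mem_range]; omega), if_pos (show jv+1 ∈ Finset.range (iv+1) from by
          simp only [Finset.mem_range]; omega), if_neg (show ¬ iv = jv by omega)]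
        simp
  have hdetF : F.det = 1 := by
    rw [Matrix.det_of_lowerTriangular F (by
      intro i j hij
      have hij' : i < j := hij
      simp only [hF, Matrix.of_apply]
      exact if_neg (not_le.2 hij'))]
    simp [hF]
  have hdetU : U.det = 1 + ∑ j ∈ Finset.Icc 1 r, epsSign r J j := by
    rw [Matrix.det_of_upperTriangular (by
      intro i j hij
      have hij' : (j:Fin r) < i := hij
      have h1' : j.1 < i.1 := hij'
      have h2' : i.1 < r := i.2
      simp only [hU, Matrix.of_apply]
      rw [if_neg (show ¬ j.1 = r - 1 by omega), if_neg (show ¬ i.1 = j.1 by omega)])]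
    rw [Finset.prod_eq_single (⟨r-1, by omega⟩ : Fin r)]
    · simp only [hU, Matrix.of_apply, if_true]
      rw [show r - 1 + 1 = r from by omega]
    · intro b _ hb'
      have hbv : ¬ b.1 = r - 1 := fun h => hb' (Fin.ext h)
      simp [hU, hbv]
    · intro h
      exact absurd (Finset.mem_univ _) h
  have hdetE : E.det = ∏ j ∈ Finset.Icc 1 r, epsSign r J j := by
    subst hE
    rw [Matrix.det_of_upperTriangular (by
      intro i j hij
      have hij' : (j:Fin r) < i := hij
      simp only [Matrix.of_apply]
      exact if_neg (not_le.2 hij'))]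
    rw [Finset.prod_congr rfl (fun i _ => by
      simp only [Matrix.of_apply]
      exact if_pos le_rfl)]
    rw [Fin.prod_univ_eq_prod_range (fun n => epsSign r J (n+1)) r, prod_shift]
  have hFETm : F * (E * Tm) = U := by rw [part1]; exact hFC
  have hdets : F.det * (E.det * Tm.det) = U.det := by
    rw [← Matrix.det_mul, ← Matrix.det_mul, hFETm]
  rw [hdetF, hdetE, hdetU, one_mul] at hdets
  have hPP : (∏ j ∈ Finset.Icc 1 r, epsSign r J j) * (∏ j ∈ Finset.Icc 1 r, epsSign r J j) = 1 := by
    rw [← Finset.prod_mul_distrib]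
    exact Finset.prod_eq_one fun j _ => eps_sq r J j
  linear_combination (∏ j ∈ Finset.Icc 1 r, epsSign r J j) * hdets - Tm.det * hPP
end

section
/- If r is even then det T(r,J) is an odd, in particular nonzero, integer; if r is odd then det T(r,J) is an even integer. Consequently, when r is odd, det T(r,J) is not invertible modulo N for any even integer N ≥ 2, while when r is even there exist even integers N ≥ 4 with det T(r,J) coprime to N. -/
/-- The tridiagonal matrix over `ZMod 2` with zero diagonal and ones on the
off-diagonals. -/
def Mz (n : ℕ) : Matrix (Fin n) (Fin n) (ZMod 2) :=
  Matrix.of fun i j => if i.1 + 1 = j.1 ∨ j.1 + 1 = i.1 then 1 else 0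

lemma Mz_step (n : ℕ) : (Mz (n+2)).det = (Mz n).det := by
  have e1 : ((1 : Fin (n+2)) : ℕ) = 1 := rfl
  have z2 : ((0 : Fin (n+2)) : ℕ) = 0 := rfl
  have z1 : ((0 : Fin (n+1)) : ℕ) = 0 := rfl
  have e0 : Fin.succAbove (1 : Fin (n+2)) (0 : Fin (n+1)) = 0 := by
    simp [Fin.succAbove, Fin.lt_def, Fin.ext_iff, e1]
  rw [Matrix.det_succ_row_zero]
  rw [Fintype.sum_eq_single (1 : Fin (n+2))]
  · have h1 : (Mz (n+2)) 0 1 = 1 := by simp [Mz, e1]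
    rw [h1]
    rw [Matrix.det_succ_column_zero]
    rw [Fintype.sum_eq_single (0 : Fin (n+1))]
    · have h2 : (Mz (n+2)).submatrix Fin.succ (Fin.succAbove 1) 0 0 = 1 := by
        simp [Mz, e0]
      rw [h2]
      have h3 : ((Mz (n+2)).submatrix Fin.succ (Fin.succAbove 1)).submatrix
          (Fin.succAbove 0) Fin.succ = Mz n := by
        ext i j
        simp only [Matrix.submatrix_apply, Mz, Matrix.of_apply, Fin.succAbove]
        simp only [Fin.lt_def, Fin.ext_iff, Fin.coe_castSucc, Fin.val_succ,
          Fin.val_zero, e1]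
        split_ifs <;> simp_all <;> omega
      rw [h3]
      have : (-1 : ZMod 2) = 1 := by decide
      simp [this]
    · intro b hb
      have hb' : (b : ℕ) ≠ 0 := fun h => hb (Fin.ext h)
      have : (Mz (n+2)).submatrix Fin.succ (Fin.succAbove 1) b 0 = 0 := by
        rw [Matrix.submatrix_apply, e0]
        simp only [Mz, Matrix.of_apply, Fin.val_succ, Fin.val_zero, z2, z1]
        split_ifs <;> first | rfl | (exfalso; simp only [false_or, or_false] at *; omega)
      rw [this]; ring
  · intro b hb
    have hb' : (b : ℕ) ≠ 1 := by
      intro h; exact hb (Fin.ext (by rw [h, e1]))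
    have : (Mz (n+2)) 0 b = 0 := by
      simp only [Mz, Matrix.of_apply, Fin.val_zero, z2, z1]
      split_ifs <;> first | rfl | (exfalso; simp only [false_or, or_false] at *; omega)
    rw [this]; ring

lemma Mz_det (n : ℕ) : (Mz n).det = if Even n then 1 else 0 := by
  induction n using Nat.twoStepInduction with
  | zero => simp [Matrix.det_fin_zero]
  | one => simp [Mz, Matrix.det_fin_one, Nat.not_even_one]
  | more n ih _ =>
    rw [Mz_step, ih]
    simp [Nat.even_add_one, Nat.not_even_iff_odd, parity_simps]

lemma intCast_zmod2_of_odd {a : ℤ} (h : Odd a) : ((a : ZMod 2) = 1) := by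
  obtain ⟨k, rfl⟩ := h
  push_cast
  have h2 : (2 : ZMod 2) = 0 := rfl
  rw [h2, zero_mul, zero_add]

lemma intCast_zmod2_of_even {a : ℤ} (h : Even a) : ((a : ZMod 2) = 0) := by
  obtain ⟨k, rfl⟩ := h
  push_cast
  have : (k : ZMod 2) + k = 2 * k := by ring
  rw [this]
  have h2 : (2 : ZMod 2) = 0 := rfl
  rw [h2, zero_mul]

/-- If `r` is even then `det T(r,J)` is an odd (in particular nonzero) integer; if `r` is odd
then `det T(r,J)` is even.  Consequently, when `r` is odd, `det T(r,J)` is not invertible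
modulo `N` for any even integer `N ≥ 2`, while when `r` is even there exist even integers
`N ≥ 4` with `det T(r,J)` coprime to `N`. -/
theorem superA_det_parity (r : ℕ) (hr : 2 ≤ r) (J : Finset ℕ)
    (hJ : J ⊆ Finset.Icc 1 r) (hJne : J.Nonempty)
    (T : ℕ → ℕ → ℤ) (hT : IsSuperAMatrix r J T)
    (d : ℤ) (hd : d = (Matrix.of fun (i j : Fin r) => T (i.1 + 1) (j.1 + 1)).det) :
    (Even r → Odd d ∧ d ≠ 0) ∧
    (Odd r → Even d) ∧
    (Odd r → ∀ N : ℕ, 2 ≤ N → Even N → ¬IsUnit ((d : ZMod N))) ∧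
    (Even r → ∃ N : ℕ, 4 ≤ N ∧ Even N ∧ IsCoprime d (N : ℤ)) := by
  obtain ⟨h1, h2, h3, h4, h5, hsym, hz⟩ := hT
  -- the off-diagonal entries are odd
  have hodd : ∀ k i, i + k = r - 1 → 1 ≤ i → Odd (T i (i+1)) := by
    intro k
    induction k with
    | zero =>
      intro i hik hi
      have hi' : i = r - 1 := by omega
      subst hi'
      have hr1 : r - 1 + 1 = r := by omega
      rw [hr1]
      by_cases h : r ∈ J
      · rw [if_pos h] at h1; rw [h1]; exact odd_one
      · rw [if_neg h] at h1; rw [h1]; exact ⟨-1, by ring⟩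
    | succ k ih =>
      intro i hik hi
      have h2' := h2 (i+1) (by omega) (by omega)
      have ho : Odd (T (i+1) (i+1+1)) := ih (i+1) (by omega) (by omega)
      have e : i + 1 - 1 = i := by omega
      by_cases hmem : (i+1) ∈ J
      · have hh := h2'.1 hmem
        rw [e] at hh
        rw [hh]; exact ho.neg
      · have hh := h2'.2 hmem
        rw [e] at hh
        rw [hh]; exact ho
  have hodd' : ∀ i, 1 ≤ i → i ≤ r - 1 → Odd (T i (i+1)) :=
    fun i ha hb => hodd (r - 1 - i) i (by omega) ha
  -- the diagonal entries are even
  have hdiag : ∀ i, 1 ≤ i → i ≤ r → Even (T i i) := by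
    intro i ha hb
    by_cases hmem : i ∈ J
    · rw [h3 i ha hb hmem]; exact Even.zero
    · by_cases hlt : i < r
      · rw [h4 i ha hlt hmem]; exact ⟨-T i (i+1), by ring⟩
      · have : i = r := by omega
        subst this
        rw [h5 hmem]; exact ⟨1, by ring⟩
  -- reduce the determinant mod 2
  have hcast : ((d : ZMod 2)) = (Mz r).det := by
    rw [hd]
    have := RingHom.map_det (Int.castRingHom (ZMod 2))
      (Matrix.of fun (i j : Fin r) => T (i.1 + 1) (j.1 + 1))
    rw [show (((Matrix.of fun (i j : Fin r) => T (i.1 + 1) (j.1 + 1)).det : ℤ) : ZMod 2)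
        = (Int.castRingHom (ZMod 2)) (Matrix.of fun (i j : Fin r) => T (i.1 + 1) (j.1 + 1)).det
        from rfl, this]
    congr 1
    ext i j
    simp only [RingHom.mapMatrix_apply, Matrix.map_apply, Matrix.of_apply, Int.coe_castRingHom, Mz]
    by_cases hij : i.1 + 1 = j.1
    · rw [if_pos (Or.inl hij)]
      have hO : Odd (T (i.1+1) (i.1+1+1)) := hodd' (i.1+1) (by omega) (by omega)
      have ej : j.1 + 1 = i.1 + 1 + 1 := by omega
      rw [ej]
      exact intCast_zmod2_of_odd hO
    · by_cases hji : j.1 + 1 = i.1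
      · rw [if_pos (Or.inr hji)]
        have hO : Odd (T (j.1+1) (j.1+1+1)) := hodd' (j.1+1) (by omega) (by omega)
        have hs := hsym (j.1+1) (i.1+1) (by omega) (by omega) (by omega) (by omega)
        have ei : i.1 + 1 = j.1 + 1 + 1 := by omega
        rw [hs, ei]
        exact intCast_zmod2_of_odd hO
      · by_cases heq : i.1 = j.1
        · rw [if_neg (by omega)]
          have ej : j.1 = i.1 := heq.symm
          rw [ej]
          exact intCast_zmod2_of_even (hdiag (i.1+1) (by omega) (by omega))
        · rw [if_neg (by omega)]
          rw [hz (i.1+1) (j.1+1) (by omega) (by omega) (by omega) (by omega) (by omega)]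
          exact Int.cast_zero
  have hfin : ((d : ZMod 2)) = if Even r then 1 else 0 := hcast.trans (Mz_det r)
  have hOddd : Even r → Odd d := by
    intro hre
    rw [← Int.not_even_iff_odd]
    intro hev
    have := intCast_zmod2_of_even hev
    rw [hfin, if_pos hre] at this
    exact one_ne_zero this
  have hEvend : Odd r → Even d := by
    intro hro
    have hzz : ((d : ZMod 2)) = 0 := by
      rw [hfin, if_neg (Nat.not_even_iff_odd.mpr hro)]
    have hdvd : ((2:ℕ):ℤ) ∣ d := (ZMod.intCast_zmod_eq_zero_iff_dvd d 2).mp hzz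
    obtain ⟨c, hc⟩ := hdvd
    exact ⟨c, by push_cast at hc; omega⟩
  refine ⟨?_, hEvend, ?_, ?_⟩
  · intro hre
    have ho := hOddd hre
    refine ⟨ho, ?_⟩
    rintro rfl
    exact (Int.not_odd_iff_even.mpr Even.zero) ho
  · intro hro N hN2 hNe hu
    have h2N : (2 : ℕ) ∣ N := hNe.two_dvd
    have hmap := hu.map (ZMod.castHom h2N (ZMod 2))
    rw [map_intCast] at hmap
    have hz2 : ((d : ZMod 2)) = 0 := intCast_zmod2_of_even (hEvend hro)
    rw [hz2] at hmap
    exact (by decide : ¬IsUnit (0 : ZMod 2)) hmap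
  · intro hre
    refine ⟨4, le_refl 4, ⟨2, by norm_num⟩, ?_⟩
    obtain ⟨k, hk⟩ := hOddd hre
    have hc2 : IsCoprime d (2 : ℤ) := ⟨1, -k, by rw [hk]; ring⟩
    have : ((4 : ℕ) : ℤ) = 2 ^ 2 := by norm_num
    rw [this]
    exact hc2.pow_right
end

section
/- Assume J = {1,…,r}. Then ℓ_j ≡ 0 (mod N) for all 1 ≤ j ≤ r if and only if r is even. Moreover, when r is even one has ℓ_j = 0 in ℤ for every j. -/
/-- `σ(i,k) = 1` if `#({i,…,k} ∩ J)` is odd and `σ(i,k) = −1` otherwise. -/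
def sigmaSign (J : Finset ℕ) (i k : ℕ) : ℤ :=
  if Odd (Finset.Icc i k ∩ J).card then 1 else -1

/-- `ℓ_j = Σ σ(i,k)`, summed over all pairs `(i,k)` with `1 ≤ i ≤ j ≤ k ≤ r`. -/
def ellInt (r : ℕ) (J : Finset ℕ) (j : ℕ) : ℤ :=
  ∑ i ∈ Finset.Icc 1 j, ∑ k ∈ Finset.Icc j r, sigmaSign J i k

lemma altS (a b : ℕ) (h : a ≤ b) :
    ∑ i ∈ Finset.Ico a b, (-1 : ℤ) ^ i = if Even (b - a) then 0 else (-1) ^ a := by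
  induction b with
  | zero =>
    interval_cases a
    simp
  | succ b ih =>
    rcases Nat.lt_or_ge a (b + 1) with h' | h'
    · have hab : a ≤ b := Nat.lt_succ_iff.mp h'
      rw [Finset.sum_Ico_succ_top hab, ih hab]
      have hb : (-1 : ℤ) ^ b = (-1) ^ a * (-1) ^ (b - a) := by
        rw [← pow_add, Nat.add_sub_cancel' hab]
      have hsub : b + 1 - a = (b - a) + 1 := by omega
      rcases Nat.even_or_odd (b - a) with he | ho
      · rw [if_pos he, hb, he.neg_one_pow, hsub, if_neg (by simp [Nat.even_add_one, he])]
        ring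
      · rw [if_neg (Nat.not_even_iff_odd.mpr ho), hb, ho.neg_one_pow, hsub,
          if_pos (by simp [Nat.even_add_one, Nat.not_even_iff_odd.mpr ho])]
        ring
    · have : a = b + 1 := by omega
      subst this
      simp

lemma sigmaSign_full (r i k : ℕ) (h1 : 1 ≤ i) (hik : i ≤ k) (hk : k ≤ r) :
    sigmaSign (Finset.Icc 1 r) i k = (-1) ^ i * (-1) ^ k := by
  have hsub : Finset.Icc i k ∩ Finset.Icc 1 r = Finset.Icc i k :=
    Finset.inter_eq_left.mpr (Finset.Icc_subset_Icc h1 hk)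
  have hcard : (Finset.Icc i k).card = (k - i) + 1 := by
    rw [Nat.card_Icc]; omega
  have hik2 : (-1 : ℤ) ^ i * (-1) ^ k = (-1) ^ (k - i) := by
    rw [← pow_add]
    have : i + k = (k - i) + 2 * i := by omega
    rw [this, pow_add, pow_mul]
    ring
  rw [sigmaSign, hsub, hcard, hik2]
  rcases Nat.even_or_odd (k - i) with he | ho
  · rw [if_pos (by simp [Nat.odd_add_one, he]), he.neg_one_pow]
  · rw [if_neg (by simp [Nat.odd_add_one, Nat.not_even_iff_odd.mpr ho]), ho.neg_one_pow]

lemma ellInt_formula (r j : ℕ) (h1 : 1 ≤ j) (h2 : j ≤ r) :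
    ellInt r (Finset.Icc 1 r) j =
      (∑ i ∈ Finset.Ico 1 (j + 1), (-1 : ℤ) ^ i) *
        (∑ k ∈ Finset.Ico j (r + 1), (-1 : ℤ) ^ k) := by
  rw [ellInt, Finset.sum_mul, ← Finset.Ico_add_one_right_eq_Icc (a := 1) (b := j)]
  refine Finset.sum_congr rfl fun i hi => ?_
  rw [Finset.mul_sum, ← Finset.Ico_add_one_right_eq_Icc (a := j) (b := r)]
  refine Finset.sum_congr rfl fun k hk => ?_
  simp only [Finset.mem_Ico] at hi hk
  exact sigmaSign_full r i k hi.1 (by omega) (by omega)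

/-- For `J = {1,…,r}`: `ℓ_j ≡ 0 (mod N)` for all `1 ≤ j ≤ r` if and only if `r` is even;
moreover when `r` is even one has `ℓ_j = 0` in `ℤ` for every such `j`. -/
theorem ellInt_allOdd_unimodular_iff (n N r : ℕ) (hn : 2 ≤ n) (hN : N = 2 * n)
    (hr : 2 ≤ r) :
    ((∀ j ∈ Finset.Icc 1 r, (N : ℤ) ∣ ellInt r (Finset.Icc 1 r) j) ↔ Even r) ∧
    (Even r → ∀ j ∈ Finset.Icc 1 r, ellInt r (Finset.Icc 1 r) j = 0) := by
  have key : Even r → ∀ j ∈ Finset.Icc 1 r, ellInt r (Finset.Icc 1 r) j = 0 := by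
    intro hre j hj
    simp only [Finset.mem_Icc] at hj
    rw [ellInt_formula r j hj.1 hj.2, altS 1 (j + 1) (by omega), altS j (r + 1) (by omega)]
    rcases Nat.even_or_odd j with he | ho
    · rw [if_pos (by simpa using he)]
      ring
    · have : Even (r + 1 - j) := by
        obtain ⟨m, hm⟩ := hre
        obtain ⟨m', hm'⟩ := ho
        exact ⟨m - m', by omega⟩
      rw [if_pos this]
      ring
  refine ⟨⟨fun h => ?_, fun hre j hj => (key hre j hj) ▸ dvd_zero _⟩, key⟩
  by_contra hodd
  have ho : Odd r := Nat.not_even_iff_odd.mp hodd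
  have h1 := h 1 (Finset.mem_Icc.mpr ⟨le_refl 1, by omega⟩)
  rw [ellInt_formula r 1 le_rfl (by omega), altS 1 2 (by omega), altS 1 (r + 1) (by omega)]
    at h1
  have hro : ¬ Even (r + 1 - 1) := by simpa using Nat.not_even_iff_odd.mpr ho
  rw [if_neg (by norm_num), if_neg hro] at h1
  norm_num at h1
  have : (N : ℤ) ∣ (1 : ℤ) := by simpa using h1
  have := Int.le_of_dvd one_pos this
  omega
end

section
/- One has ℓ_j ≡ 0 (mod N) for every 1 ≤ j ≤ r if and only if J = {1,…,r} and r is even. (Equivalently: the bosonization of the Nichols algebra of super type A(r;q;J) over (ℤ/N)^r, for q of even order N = 2n > 2, is unimodular if and only if all simple roots are odd and the rank r is even.) -/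
namespace EllAux

/-- `ε(m) = (−1)^{#([1,m] ∩ J)}`. -/
def eps (J : Finset ℕ) (m : ℕ) : ℤ :=
  if Odd ((Finset.Icc 1 m ∩ J).card) then -1 else 1

/-- the walk `S(m) = ε(0) + ⋯ + ε(m)`. -/
def Sw (J : Finset ℕ) (m : ℕ) : ℤ := ∑ i ∈ Finset.range (m+1), eps J i

lemma eps_zero (J : Finset ℕ) : eps J 0 = 1 := by simp [eps]

lemma eps_mem (J : Finset ℕ) (m : ℕ) : eps J m = 1 ∨ eps J m = -1 := by
  unfold eps; split <;> simp

lemma Sw_zero (J : Finset ℕ) : Sw J 0 = 1 := by simp [Sw, eps_zero]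

lemma Sw_succ (J : Finset ℕ) (m : ℕ) : Sw J (m+1) = Sw J m + eps J (m+1) := by
  simp [Sw, Finset.sum_range_succ]

lemma card_split (J : Finset ℕ) {a b : ℕ} (h : a ≤ b) :
    ((Finset.Ioc 0 a ∩ J).card + (Finset.Ioc a b ∩ J).card
      = (Finset.Ioc 0 b ∩ J).card) := by
  have hd : Disjoint (Finset.Ioc 0 a ∩ J) (Finset.Ioc a b ∩ J) := by
    rw [Finset.disjoint_left]
    intro x hx hy
    simp only [Finset.mem_inter, Finset.mem_Ioc] at hx hy
    omega
  rw [← Finset.card_union_of_disjoint hd, ← Finset.union_inter_distrib_right,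
    Finset.Ioc_union_Ioc_eq_Ioc (Nat.zero_le a) h]

lemma icc_one (m : ℕ) : Finset.Icc 1 m = Finset.Ioc 0 m := by
  rw [← Finset.Icc_add_one_left_eq_Ioc, zero_add]

lemma sigma_eq (J : Finset ℕ) {i k : ℕ} (h1 : 1 ≤ i) (h2 : i ≤ k) :
    sigmaSign J i k = -(eps J (i-1) * eps J k) := by
  have hik : Finset.Icc i k = Finset.Ioc (i-1) k := by
    rw [← Finset.Icc_add_one_left_eq_Ioc]; congr 1; omega
  have hsplit := card_split J (a := i - 1) (b := k) (by omega)
  unfold sigmaSign eps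
  rw [hik, icc_one, icc_one]
  simp only [Nat.odd_iff] at *
  split_ifs <;> omega

lemma ell_eq (r : ℕ) (J : Finset ℕ) {j : ℕ} (h1 : 1 ≤ j) (h2 : j ≤ r) :
    ellInt r J j = -(Sw J (j-1) * (Sw J r - Sw J (j-1))) := by
  have step1 : ellInt r J j
      = ∑ i ∈ Finset.Icc 1 j, ∑ k ∈ Finset.Icc j r, -(eps J (i-1) * eps J k) := by
    apply Finset.sum_congr rfl
    intro i hi
    apply Finset.sum_congr rfl
    intro k hk
    simp only [Finset.mem_Icc] at hi hk
    exact sigma_eq J hi.1 (le_trans hi.2 hk.1)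
  have step2 : ellInt r J j
      = -((∑ i ∈ Finset.Icc 1 j, eps J (i-1)) * (∑ k ∈ Finset.Icc j r, eps J k)) := by
    rw [step1, Finset.sum_mul_sum]
    rw [← Finset.sum_neg_distrib]
    apply Finset.sum_congr rfl
    intro i _
    rw [← Finset.sum_neg_distrib]
  have e1 : (∑ i ∈ Finset.Icc 1 j, eps J (i-1)) = Sw J (j-1) := by
    have : Finset.Icc 1 j = Finset.Ico 1 (j+1) := by rw [Finset.Ico_add_one_right_eq_Icc]
    rw [this, Finset.sum_Ico_eq_sum_range]
    simp only [Nat.add_sub_cancel]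
    have hj : j - 1 + 1 = j := by omega
    rw [Sw, hj]
    apply Finset.sum_congr rfl
    intro m _
    congr 1
    omega
  have e2 : (∑ k ∈ Finset.Icc j r, eps J k) = Sw J r - Sw J (j-1) := by
    have h0 : Finset.Icc j r = Finset.Ico j (r+1) := by rw [Finset.Ico_add_one_right_eq_Icc]
    have hc := Finset.sum_Ico_consecutive (f := eps J) (m := 0) (n := j) (k := r+1)
      (Nat.zero_le j) (by omega : j ≤ r+1)
    have hr1 : Sw J r = ∑ k ∈ Finset.Ico 0 (r+1), eps J k := by
      rw [Sw, Finset.range_eq_Ico]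
    have hj1 : Sw J (j-1) = ∑ k ∈ Finset.Ico 0 j, eps J k := by
      have hjj : j - 1 + 1 = j := by omega
      rw [Sw, hjj, Finset.range_eq_Ico]
    rw [h0, hr1, hj1]
    linarith
  rw [step2, e1, e2]

/-- For `J = Icc 1 r`, the walk alternates `1,0,1,0,…` up to `r`. -/
lemma Sw_icc (r : ℕ) : ∀ m, m ≤ r → Sw (Finset.Icc 1 r) m = if Even m then 1 else 0 := by
  have heps : ∀ m, 1 ≤ m → m ≤ r →
      eps (Finset.Icc 1 r) m = if Odd m then -1 else 1 := by
    intro m h1 h2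
    have hss : Finset.Icc 1 m ∩ Finset.Icc 1 r = Finset.Icc 1 m := by
      apply Finset.inter_eq_left.mpr
      intro x hx
      simp only [Finset.mem_Icc] at *
      omega
    rw [eps, hss, Nat.card_Icc]
    simp only [Nat.add_sub_cancel]
  intro m
  induction m with
  | zero => intro _; simp [Sw_zero]
  | succ k ih =>
    intro hk
    rw [Sw_succ, ih (by omega), heps (k+1) (by omega) hk]
    rcases Nat.even_or_odd k with hp | hp
    · rw [if_pos hp, if_pos hp.add_one,
        if_neg (Nat.not_even_iff_odd.mpr hp.add_one)]
      ring
    · rw [if_neg (Nat.not_even_iff_odd.mpr hp),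
        if_neg (Nat.not_odd_iff_even.mpr hp.add_one), if_pos hp.add_one]
      ring

end EllAux

open EllAux in
/-- `ℓ_j ≡ 0 (mod N)` for every `1 ≤ j ≤ r` if and only if `J = {1,…,r}` and `r` is even;
equivalently, the bosonization of the Nichols algebra of super type A(r;q;J) over `(ℤ/N)^r`
for `q` of even order `N = 2n > 2` is unimodular iff all simple roots are odd and `r` is even. -/
theorem ellInt_unimodular_iff (n N r : ℕ) (hn : 2 ≤ n) (hN : N = 2 * n) (hr : 2 ≤ r)
    (J : Finset ℕ) (hJ : J ⊆ Finset.Icc 1 r) (hJne : J.Nonempty) :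
    (∀ j ∈ Finset.Icc 1 r, (N : ℤ) ∣ ellInt r J j) ↔
      (J = Finset.Icc 1 r ∧ Even r) := by
  have hN4 : (4:ℤ) ≤ (N:ℤ) := by
    have : 4 ≤ N := by omega
    exact_mod_cast this
  constructor
  · intro h
    have H : ∀ m, m < r → (N:ℤ) ∣ Sw J m * (Sw J r - Sw J m) := by
      intro m hm
      have hmem : (m+1) ∈ Finset.Icc 1 r := by simp [Finset.mem_Icc]; omega
      have := h (m+1) hmem
      rw [ell_eq r J (by omega) (by omega)] at this
      simp only [Nat.add_sub_cancel] at this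
      exact (dvd_neg).mp this
    have hT : (N:ℤ) ∣ (Sw J r - 1) := by
      have := H 0 (by omega)
      rw [Sw_zero] at this
      simpa using this
    have hnot2 : ¬ ((N:ℤ) ∣ 2) := by
      intro h2
      have := Int.le_of_dvd (by norm_num) h2
      omega
    -- the walk stays in {0,1} before r
    have key : ∀ m, m < r → Sw J m = if Even m then 1 else 0 := by
      intro m
      induction m with
      | zero => intro _; simp [Sw_zero]
      | succ k ih =>
        intro hk
        have hsk := Sw_succ J k
        have hik : Sw J k = if Even k then 1 else 0 := ih (by omega)
        have hHk1 := H (k+1) hk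
        rcases eps_mem J (k+1) with he | he <;>
          rcases Nat.even_or_odd k with hp | hp
        · -- even k, eps = 1: walk hits 2, contradiction
          exfalso
          have h2 : Sw J (k+1) = 2 := by rw [hsk, hik, he, if_pos hp]; ring
          rw [h2] at hHk1
          apply hnot2
          have hd := dvd_sub (Dvd.dvd.mul_left hT 2) hHk1
          have h3 : 2 * (Sw J r - 1) - 2 * (Sw J r - 2) = 2 := by ring
          rwa [h3] at hd
        · -- odd k, eps = 1: Sw (k+1) = 1 ✓
          rw [hsk, hik, he, if_neg (Nat.not_even_iff_odd.mpr hp), if_pos hp.add_one]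
          ring
        · -- even k, eps = -1: Sw (k+1) = 0 ✓
          rw [hsk, hik, he, if_pos hp, if_neg (Nat.not_even_iff_odd.mpr hp.add_one)]
          ring
        · -- odd k, eps = -1: walk hits -1, contradiction
          exfalso
          have h2 : Sw J (k+1) = -1 := by
            rw [hsk, hik, he, if_neg (Nat.not_even_iff_odd.mpr hp)]; ring
          rw [h2] at hHk1
          apply hnot2
          have hd : (N:ℤ) ∣ (Sw J r + 1) := by
            have h3 : (-1 : ℤ) * (Sw J r - -1) = -(Sw J r + 1) := by ring
            rw [h3] at hHk1
            exact (dvd_neg).mp hHk1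
          have hd2 := dvd_sub hd hT
          have h3 : (Sw J r + 1) - (Sw J r - 1) = 2 := by ring
          rwa [h3] at hd2
    have hrm1 : Sw J (r-1) = if Even (r-1) then 1 else 0 := key (r-1) (by omega)
    have hswr : Sw J r = Sw J (r-1) + eps J r := by
      have hs := Sw_succ J (r-1)
      have hr1 : r - 1 + 1 = r := by omega
      rwa [hr1] at hs
    -- Sw J r ∈ [-1, 2], so divisibility forces Sw J r = 1
    have h01 : Sw J (r-1) = 0 ∨ Sw J (r-1) = 1 := by
      rcases Nat.even_or_odd (r-1) with hp | hp
      · right; rw [hrm1, if_pos hp]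
      · left; rw [hrm1, if_neg (Nat.not_even_iff_odd.mpr hp)]
    have hbound : -2 ≤ Sw J r - 1 ∧ Sw J r - 1 ≤ 1 := by
      rcases eps_mem J r with he | he <;> rcases h01 with h01 | h01 <;> omega
    have hT1 : Sw J r = 1 := by
      have h0 : Sw J r - 1 = 0 := by
        apply Int.eq_zero_of_abs_lt_dvd hT
        rw [abs_lt]
        omega
      omega
    -- r is even
    have hrodd : Odd (r - 1) := by
      by_contra hc
      have hp : Even (r-1) := Nat.not_odd_iff_even.mp hc
      rw [if_pos hp] at hrm1
      rcases eps_mem J r with he | he <;> rw [hswr, hrm1, he] at hT1 <;> omega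
    have hre : Even r := by
      have : r = (r-1) + 1 := by omega
      rw [this]
      exact hrodd.add_one
    -- full description of the walk up to r
    have keyle : ∀ m, m ≤ r → Sw J m = if Even m then 1 else 0 := by
      intro m hm
      rcases lt_or_eq_of_le hm with hlt | heq
      · exact key m hlt
      · subst heq; rw [if_pos hre]; exact hT1
    -- ε alternates, hence every m ∈ [1,r] lies in J
    have hepsval : ∀ m, 1 ≤ m → m ≤ r → eps J m = if Even m then 1 else -1 := by
      intro m h1 h2
      have hs := Sw_succ J (m-1)
      have hm1 : m - 1 + 1 = m := by omega
      rw [hm1] at hs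
      have ha := keyle (m-1) (by omega)
      have hb := keyle m h2
      rcases Nat.even_or_odd m with hp | hp
      · have hq : Odd (m-1) := by
          rcases Nat.even_or_odd (m-1) with hq | hq
          · exfalso
            have := hq.add_one
            rw [hm1] at this
            exact (Nat.not_even_iff_odd.mpr this) hp
          · exact hq
        rw [if_pos hp] at hb ⊢
        rw [if_neg (Nat.not_even_iff_odd.mpr hq)] at ha
        omega
      · have hq : Even (m-1) := by
          rcases Nat.even_or_odd (m-1) with hq | hq
          · exact hq
          · exfalso
            have := hq.add_one
            rw [hm1] at this
            exact (Nat.not_even_iff_odd.mpr hp) this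
        rw [if_neg (Nat.not_even_iff_odd.mpr hp)] at hb ⊢
        rw [if_pos hq] at ha
        omega
    have hmemJ : ∀ m ∈ Finset.Icc 1 r, m ∈ J := by
      intro m hm
      simp only [Finset.mem_Icc] at hm
      by_contra hmJ
      have hset : Finset.Icc 1 m ∩ J = Finset.Icc 1 (m-1) ∩ J := by
        ext x
        simp only [Finset.mem_inter, Finset.mem_Icc]
        constructor
        · rintro ⟨⟨hx1, hxm⟩, hxJ⟩
          refine ⟨⟨hx1, ?_⟩, hxJ⟩
          by_contra hc
          have : x = m := by omega
          subst this
          exact hmJ hxJ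
        · rintro ⟨⟨hx1, hxm⟩, hxJ⟩
          exact ⟨⟨hx1, by omega⟩, hxJ⟩
      have heq : eps J m = eps J (m-1) := by
        unfold eps
        rw [hset]
      rcases Nat.eq_or_lt_of_le hm.1 with h1 | h1
      · -- m = 1
        have hm1 : m = 1 := h1.symm
        subst hm1
        have := hepsval 1 le_rfl hm.2
        rw [if_neg (by simp)] at this
        rw [heq] at this
        simp [eps_zero] at this
      · -- m ≥ 2
        have hv1 := hepsval m hm.1 hm.2
        have hv2 := hepsval (m-1) (by omega) (by omega)
        rw [heq, hv2] at hv1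
        rcases Nat.even_or_odd m with hp | hp
        · have hq : Odd (m-1) := by
            rcases Nat.even_or_odd (m-1) with hq | hq
            · exfalso
              have h2 := hq.add_one
              rw [(by omega : m - 1 + 1 = m)] at h2
              exact (Nat.not_even_iff_odd.mpr h2) hp
            · exact hq
          rw [if_pos hp, if_neg (Nat.not_even_iff_odd.mpr hq)] at hv1
          norm_num at hv1
        · have hq : Even (m-1) := by
            rcases Nat.even_or_odd (m-1) with hq | hq
            · exact hq
            · exfalso
              have h2 := hq.add_one
              rw [(by omega : m - 1 + 1 = m)] at h2
              exact (Nat.not_even_iff_odd.mpr hp) h2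
          rw [if_neg (Nat.not_even_iff_odd.mpr hp), if_pos hq] at hv1
          norm_num at hv1
    exact ⟨Finset.Subset.antisymm hJ (fun m hm => hmemJ m hm), hre⟩
  · rintro ⟨rfl, hre⟩
    intro j hj
    simp only [Finset.mem_Icc] at hj
    rw [ell_eq r _ hj.1 hj.2]
    have h1 : Sw (Finset.Icc 1 r) (j-1) = if Even (j-1) then 1 else 0 :=
      Sw_icc r (j-1) (by omega)
    have h2 : Sw (Finset.Icc 1 r) r = 1 := by rw [Sw_icc r r le_rfl, if_pos hre]
    rcases Nat.even_or_odd (j-1) with hp | hp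
    · rw [h1, h2, if_pos hp]
      simp
    · rw [h1, h2, if_neg (Nat.not_even_iff_odd.mpr hp)]
      simp
end

section
/- Fix 0 ≤ l ≤ r−2 and assume r−i ∉ J for all 0 ≤ i ≤ l. Then ℓ_{r−i} ≡ (i+1)·(ℓ_r + i) (mod N) for all 0 ≤ i ≤ l+1. -/
/-- If `r−i ∉ J` for all `0 ≤ i ≤ l` (where `0 ≤ l ≤ r−2`), then
`ℓ_{r−i} ≡ (i+1)·(ℓ_r + i) (mod N)` for all `0 ≤ i ≤ l+1`. -/
theorem ellInt_of_not_mem_rec (n N r : ℕ) (hn : 2 ≤ n) (hN : N = 2 * n) (hr : 2 ≤ r)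
    (J : Finset ℕ) (hJ : J ⊆ Finset.Icc 1 r) (hJne : J.Nonempty)
    (l : ℕ) (hl : l ≤ r - 2) (hJl : ∀ i ≤ l, r - i ∉ J) :
    ∀ i ≤ l + 1,
      ellInt r J (r - i) ≡ ((i : ℤ) + 1) * (ellInt r J r + (i : ℤ)) [ZMOD (N : ℤ)] := by
  intro m hm
  -- every element of J is at most r - l - 1
  have hxJ : ∀ x ∈ J, x + (l + 1) ≤ r := by
    intro x hx
    have hx1 := hJ hx
    simp only [Finset.mem_Icc] at hx1
    by_contra h
    push_neg at h
    have h1 : r - x ≤ l := by omega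
    exact hJl (r - x) h1 (by rwa [Nat.sub_sub_self hx1.2])
  have hmr : m + 1 ≤ r := by omega
  -- sigmaSign is independent of k for k ∈ [r-m, r]
  have hsig : ∀ i k, r - m ≤ k → k ≤ r → sigmaSign J i k = sigmaSign J i r := by
    intro i k hk1 hk2
    unfold sigmaSign
    have : Finset.Icc i k ∩ J = Finset.Icc i r ∩ J := by
      ext x
      simp only [Finset.mem_inter, Finset.mem_Icc]
      constructor
      · rintro ⟨⟨h1, h2⟩, h3⟩; exact ⟨⟨h1, le_trans h2 hk2⟩, h3⟩
      · rintro ⟨⟨h1, h2⟩, h3⟩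
        have := hxJ x h3
        exact ⟨⟨h1, by omega⟩, h3⟩
    rw [this]
  -- sigmaSign J i r = -1 for i > r - m
  have hsigneg : ∀ i, r - m < i → sigmaSign J i r = -1 := by
    intro i hi
    unfold sigmaSign
    have hempty : Finset.Icc i r ∩ J = ∅ := by
      ext x
      simp only [Finset.mem_inter, Finset.mem_Icc, Finset.notMem_empty, iff_false]
      rintro ⟨⟨h1, h2⟩, h3⟩
      have := hxJ x h3
      omega
    rw [hempty]
    simp [Nat.odd_iff]
  set S : ℤ := ∑ i ∈ Finset.Icc 1 (r - m), sigmaSign J i r with hS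
  -- ellInt r J (r - m) = (m+1) * S
  have h1 : ellInt r J (r - m) = ((m : ℤ) + 1) * S := by
    unfold ellInt
    rw [hS, Finset.mul_sum]
    refine Finset.sum_congr rfl fun i hi => ?_
    have : ∑ k ∈ Finset.Icc (r - m) r, sigmaSign J i k
        = ∑ k ∈ Finset.Icc (r - m) r, sigmaSign J i r := by
      refine Finset.sum_congr rfl fun k hk => ?_
      simp only [Finset.mem_Icc] at hk
      exact hsig i k hk.1 hk.2
    rw [this, Finset.sum_const, Nat.card_Icc]
    have hcard : r + 1 - (r - m) = m + 1 := by omega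
    rw [hcard, nsmul_eq_mul]
    push_cast
    ring
  -- ellInt r J r = S - m
  have h2 : ellInt r J r = S - (m : ℤ) := by
    unfold ellInt
    have hsplit : Finset.Icc 1 (r - m) ∪ Finset.Ioc (r - m) r = Finset.Icc 1 r := by
      ext x
      simp only [Finset.mem_union, Finset.mem_Icc, Finset.mem_Ioc]
      omega
    have hdisj : Disjoint (Finset.Icc 1 (r - m)) (Finset.Ioc (r - m) r) := by
      simp only [Finset.disjoint_left, Finset.mem_Icc, Finset.mem_Ioc]
      omega
    have hr2 : ∀ i ∈ Finset.Icc 1 r, ∑ k ∈ Finset.Icc r r, sigmaSign J i k = sigmaSign J i r := by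
      intro i _
      rw [Finset.Icc_self, Finset.sum_singleton]
    rw [Finset.sum_congr rfl hr2, ← hsplit, Finset.sum_union hdisj]
    have htail : ∑ i ∈ Finset.Ioc (r - m) r, sigmaSign J i r = -(m : ℤ) := by
      have : ∀ i ∈ Finset.Ioc (r - m) r, sigmaSign J i r = -1 := by
        intro i hi
        simp only [Finset.mem_Ioc] at hi
        exact hsigneg i hi.1
      rw [Finset.sum_congr rfl this, Finset.sum_const, Nat.card_Ioc]
      have : r - (r - m) = m := by omega
      rw [this, nsmul_eq_mul]
      ring
    rw [htail, ← hS]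
    ring
  have : ellInt r J (r - m) = ((m : ℤ) + 1) * (ellInt r J r + (m : ℤ)) := by
    rw [h1, h2]; ring
  rw [this]
end

section
/- Fix 0 ≤ l ≤ r−1 and assume r−i ∈ J for all 0 ≤ i ≤ l. Then, for every 0 ≤ i ≤ l, one has ℓ_{r−i} ≡ ℓ_r (mod N) if i is even, and ℓ_{r−i} ≡ 0 (mod N) if i is odd. -/
open Finset

/-- Alternating sum over an interval. -/
lemma altsum (j d : ℕ) :
    ∑ k ∈ Icc j (j + d), ((-1) : ℤ) ^ (j + d - k) = if Even d then 1 else 0 := by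
  induction d with
  | zero => simp
  | succ d ih =>
    rw [show j + (d + 1) = (j + d) + 1 from rfl,
      Finset.sum_Icc_succ_top (by omega : j ≤ (j + d) + 1)]
    have h1 : ∀ k ∈ Icc j (j + d),
        ((-1) : ℤ) ^ (j + d + 1 - k) = -((-1) : ℤ) ^ (j + d - k) := by
      intro k hk
      simp only [mem_Icc] at hk
      rw [show j + d + 1 - k = (j + d - k) + 1 by omega, pow_succ]
      ring
    rw [Finset.sum_congr rfl h1, Finset.sum_neg_distrib, ih]
    rcases Nat.even_or_odd d with hd | hd
    · simp [hd, Nat.even_add_one, Nat.not_even_iff_odd, hd.add_one]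
    · simp [Nat.not_even_iff_odd.mpr hd, Nat.even_add_one, Nat.not_odd_iff_even.mp,
        hd.add_one]

lemma card_inter_split (J : Finset ℕ) (r k i : ℕ) (hik : i ≤ k) (hkr : k ≤ r)
    (hsub : Icc (k + 1) r ⊆ J) :
    (Icc i r ∩ J).card = (Icc i k ∩ J).card + (r - k) := by
  have hunion : Icc i r ∩ J = (Icc i k ∩ J) ∪ Icc (k + 1) r := by
    ext x
    simp only [mem_inter, mem_union, mem_Icc]
    constructor
    · rintro ⟨⟨h1, h2⟩, h3⟩
      by_cases hx : x ≤ k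
      · exact Or.inl ⟨⟨h1, hx⟩, h3⟩
      · exact Or.inr ⟨by omega, h2⟩
    · rintro (⟨⟨h1, h2⟩, h3⟩ | ⟨h1, h2⟩)
      · exact ⟨⟨h1, by omega⟩, h3⟩
      · exact ⟨⟨by omega, h2⟩, hsub (mem_Icc.mpr ⟨h1, h2⟩)⟩
  have hdisj : Disjoint (Icc i k ∩ J) (Icc (k + 1) r) := by
    rw [Finset.disjoint_left]
    intro x hx hx'
    simp only [mem_inter, mem_Icc] at hx hx'
    omega
  rw [hunion, Finset.card_union_of_disjoint hdisj, Nat.card_Icc]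
  omega

lemma sigma_shift (J : Finset ℕ) (r k i : ℕ) (hik : i ≤ k) (hkr : k ≤ r)
    (hsub : Icc (k + 1) r ⊆ J) :
    sigmaSign J i k = ((-1) : ℤ) ^ (r - k) * sigmaSign J i r := by
  have hc := card_inter_split J r k i hik hkr hsub
  unfold sigmaSign
  rw [hc]
  rcases Nat.even_or_odd (r - k) with h | h
  · rw [h.neg_one_pow]
    have : Odd ((Icc i k ∩ J).card + (r - k)) ↔ Odd ((Icc i k ∩ J).card) := by
      rw [Nat.odd_add]
      exact ⟨fun hh => hh.mpr h, fun hh => ⟨fun _ => h, fun _ => hh⟩⟩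
    rw [if_congr this rfl rfl]; ring
  · rw [h.neg_one_pow]
    have : Odd ((Icc i k ∩ J).card + (r - k)) ↔ ¬ Odd ((Icc i k ∩ J).card) := by
      rw [Nat.odd_add]
      constructor
      · intro hh h2; exact (Nat.not_even_iff_odd.mpr h) (hh.mp h2)
      · intro hh
        exact ⟨fun ho => absurd ho hh, fun he => ((Nat.not_even_iff_odd.mpr h) he).elim⟩
    rw [if_congr this rfl rfl]
    split_ifs <;> ring

/-- Key identity: if `{j,…,r} ⊆ J` then `ℓ_j = ℓ_r` when `r−j` is even and `ℓ_j = 0`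
when `r−j` is odd. -/
lemma ell_tail (r : ℕ) (J : Finset ℕ) (j : ℕ) (hj : 1 ≤ j) (hjr : j ≤ r)
    (hsub : Icc j r ⊆ J) :
    ellInt r J j = if Even (r - j) then ellInt r J r else 0 := by
  have hsub' : ∀ k, j ≤ k → Icc (k + 1) r ⊆ J := fun k hk =>
    Finset.Subset.trans (Finset.Icc_subset_Icc_left (by omega)) hsub
  have hinner : ∀ i ∈ Icc 1 j,
      ∑ k ∈ Icc j r, sigmaSign J i k
        = (if Even (r - j) then 1 else 0) * sigmaSign J i r := by
    intro i hi
    simp only [mem_Icc] at hi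
    have : ∀ k ∈ Icc j r, sigmaSign J i k = ((-1) : ℤ) ^ (r - k) * sigmaSign J i r := by
      intro k hk
      simp only [mem_Icc] at hk
      exact sigma_shift J r k i (le_trans hi.2 hk.1) hk.2 (hsub' k hk.1)
    rw [Finset.sum_congr rfl this, ← Finset.sum_mul]
    congr 1
    have hrj : r = j + (r - j) := by omega
    calc ∑ k ∈ Icc j r, ((-1) : ℤ) ^ (r - k)
        = ∑ k ∈ Icc j (j + (r - j)), ((-1) : ℤ) ^ (j + (r - j) - k) := by
          rw [← hrj]
      _ = if Even (r - j) then 1 else 0 := altsum j (r - j)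
  have hr_expand : (∑ i ∈ Icc 1 r, ∑ k ∈ Icc r r, sigmaSign J i k)
      = ∑ i ∈ Icc 1 r, sigmaSign J i r := by
    apply Finset.sum_congr rfl
    intro i _
    rw [Finset.Icc_self, Finset.sum_singleton]
  unfold ellInt
  rw [Finset.sum_congr rfl hinner, ← Finset.mul_sum]
  rcases Nat.even_or_odd (r - j) with h | h
  · rw [if_pos h, if_pos h, one_mul, hr_expand]
    -- split Icc 1 r = Icc 1 j ∪ Icc (j+1) r
    have hsplit : Icc 1 r = Icc 1 j ∪ Icc (j + 1) r := by
      ext x; simp only [mem_union, mem_Icc]; omega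
    have hdisj : Disjoint (Icc 1 j) (Icc (j + 1) r) := by
      rw [Finset.disjoint_left]; intro x hx hx'
      simp only [mem_Icc] at hx hx'; omega
    rw [hsplit, Finset.sum_union hdisj, left_eq_add]
    rcases eq_or_lt_of_le hjr with heq | hlt
    · rw [heq]; simp
    · have hterm : ∀ i ∈ Icc (j + 1) r, sigmaSign J i r = ((-1) : ℤ) ^ (r - i) := by
        intro i hi
        simp only [mem_Icc] at hi
        have hJi : Icc i r ∩ J = Icc i r :=
          Finset.inter_eq_left.mpr
            (Finset.Subset.trans (Finset.Icc_subset_Icc_left (by omega)) hsub)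
        unfold sigmaSign
        rw [hJi, Nat.card_Icc]
        have hri : r + 1 - i = (r - i) + 1 := by omega
        rw [hri]
        rcases Nat.even_or_odd (r - i) with he | he
        · rw [if_pos he.add_one, he.neg_one_pow]
        · rw [if_neg (Nat.not_odd_iff_even.mpr he.add_one), he.neg_one_pow]
      rw [Finset.sum_congr rfl hterm]
      have hrj1 : r = (j + 1) + (r - j - 1) := by omega
      calc ∑ i ∈ Icc (j + 1) r, ((-1) : ℤ) ^ (r - i)
          = ∑ i ∈ Icc (j + 1) ((j + 1) + (r - j - 1)),
              ((-1) : ℤ) ^ ((j + 1) + (r - j - 1) - i) := by rw [← hrj1]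
        _ = if Even (r - j - 1) then 1 else 0 := altsum (j + 1) (r - j - 1)
        _ = 0 := by
            rw [if_neg]
            intro he
            have : Odd (r - j) := by
              have := he.add_one
              rwa [show r - j - 1 + 1 = r - j by omega] at this
            exact (Nat.not_even_iff_odd.mpr this) h
  · rw [if_neg (Nat.not_even_iff_odd.mpr h), if_neg (Nat.not_even_iff_odd.mpr h), zero_mul]

/-- If `r−i ∈ J` for all `0 ≤ i ≤ l` (where `0 ≤ l ≤ r−1`), then for every `0 ≤ i ≤ l` one has
`ℓ_{r−i} ≡ ℓ_r (mod N)` if `i` is even and `ℓ_{r−i} ≡ 0 (mod N)` if `i` is odd. -/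
theorem ellInt_of_mem_rec (n N r : ℕ) (hn : 2 ≤ n) (hN : N = 2 * n) (hr : 2 ≤ r)
    (J : Finset ℕ) (hJ : J ⊆ Finset.Icc 1 r) (hJne : J.Nonempty)
    (l : ℕ) (hl : l ≤ r - 1) (hJl : ∀ i ≤ l, r - i ∈ J) :
    ∀ i ≤ l,
      (Even i → ellInt r J (r - i) ≡ ellInt r J r [ZMOD (N : ℤ)]) ∧
      (Odd i → ellInt r J (r - i) ≡ 0 [ZMOD (N : ℤ)]) := by
  intro i hi
  have hj1 : 1 ≤ r - i := by omega
  have hjr : r - i ≤ r := by omega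
  have hsub : Icc (r - i) r ⊆ J := by
    intro m hm
    simp only [mem_Icc] at hm
    have := hJl (r - m) (by omega)
    rwa [show r - (r - m) = m by omega] at this
  have hkey := ell_tail r J (r - i) hj1 hjr hsub
  rw [show r - (r - i) = i by omega] at hkey
  constructor
  · intro hev
    rw [hkey, if_pos hev]
  · intro hodd
    rw [hkey, if_neg (Nat.not_even_iff_odd.mpr hodd)]
end

section
/- The following two conditions hold simultaneously if and only if J = {1,…,r} and r is even: (a) ℓ_j is an even integer for every 1 ≤ j ≤ r; and (b) ℓ_i + Σ_{j=1}^r u_{i,j}·ℓ_j ≡ −2·u_{i,i} (mod N) for every 1 ≤ i ≤ r, i.e. (Id + u)·ℓ ≡ −2·u_Δ (mod N) as vectors. (These are exactly the conditions for the Drinfeld double of the bosonization of the Nichols algebra of super type A(r;q;J), q of order N, to admit a ribbon element; hence that double is ribbon if and only if all simple roots are odd and r is even.) -/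
/-- The upper triangular `r×r` integer matrix `u` with `u_{i,i} = n` if `i ∈ J`,
`u_{i,i} = ε_{i+1}` if `i ∉ J`, `u_{i,i+1} = −ε_{i+1}`, and all other entries `0`. -/
def uEntry (n r : ℕ) (J : Finset ℕ) (i j : ℕ) : ℤ :=
  if j = i then (if i ∈ J then (n : ℤ) else epsSign r J (i + 1))
  else if j = i + 1 then -epsSign r J (i + 1)
  else 0



/-- partial sums of epsilons -/
def AA (r : ℕ) (J : Finset ℕ) (j : ℕ) : ℤ := ∑ i ∈ Finset.Icc 1 j, epsSign r J i

/-- the ell formula -/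
def LL (r : ℕ) (J : Finset ℕ) (j : ℕ) : ℤ :=
  AA r J j ^ 2 - AA r J (r+1) * AA r J j

lemma eps_cases (r : ℕ) (J : Finset ℕ) (j : ℕ) :
    epsSign r J j = 1 ∨ epsSign r J j = -1 := by
  unfold epsSign
  rcases Nat.even_or_odd ((Finset.Icc j r ∩ J).card) with h | h
  · exact Or.inl h.neg_one_pow
  · exact Or.inr h.neg_one_pow

lemma eps_sq (r : ℕ) (J : Finset ℕ) (j : ℕ) :
    epsSign r J j * epsSign r J j = 1 := by
  rcases eps_cases r J j with h | h <;> rw [h] <;> norm_num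

lemma eps_top (r : ℕ) (J : Finset ℕ) : epsSign r J (r+1) = 1 := by
  unfold epsSign
  rw [Finset.Icc_eq_empty (by omega)]
  simp

lemma card_split (r : ℕ) (J : Finset ℕ) {j : ℕ} (h1 : 1 ≤ j) (h2 : j ≤ r) :
    (Finset.Icc j r ∩ J).card
      = (Finset.Icc (j+1) r ∩ J).card + (if j ∈ J then 1 else 0) := by
  have hIoc : Finset.Icc (j+1) r = Finset.Ioc j r := by
    ext x; simp [Finset.mem_Icc, Finset.mem_Ioc]
  rw [hIoc]
  have hins : Finset.Icc j r = insert j (Finset.Ioc j r) :=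
    (Finset.Ioc_insert_left h2).symm
  rw [hins]
  by_cases hj : j ∈ J
  · have : insert j (Finset.Ioc j r) ∩ J = insert j (Finset.Ioc j r ∩ J) := by
      ext x
      simp only [Finset.mem_inter, Finset.mem_insert]
      constructor
      · rintro ⟨h | h, hx⟩
        · exact Or.inl h
        · exact Or.inr ⟨h, hx⟩
      · rintro (h | ⟨h, hx⟩)
        · exact ⟨Or.inl h, by rwa [h]⟩
        · exact ⟨Or.inr h, hx⟩
    rw [this, Finset.card_insert_of_notMem (by simp [Finset.mem_Ioc])]
    simp [hj]
  · have : insert j (Finset.Ioc j r) ∩ J = Finset.Ioc j r ∩ J := by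
      ext x
      simp only [Finset.mem_inter, Finset.mem_insert]
      constructor
      · rintro ⟨h | h, hx⟩
        · exact absurd (h ▸ hx) hj
        · exact ⟨h, hx⟩
      · rintro ⟨h, hx⟩; exact ⟨Or.inr h, hx⟩
    rw [this]
    simp [hj]

lemma eps_succ_mem (r : ℕ) (J : Finset ℕ) {j : ℕ} (h1 : 1 ≤ j) (h2 : j ≤ r)
    (hj : j ∈ J) : epsSign r J j = - epsSign r J (j+1) := by
  unfold epsSign
  rw [card_split r J h1 h2, if_pos hj, pow_succ]
  ring

lemma eps_succ_not_mem (r : ℕ) (J : Finset ℕ) {j : ℕ} (h1 : 1 ≤ j) (h2 : j ≤ r)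
    (hj : j ∉ J) : epsSign r J j = epsSign r J (j+1) := by
  unfold epsSign
  rw [card_split r J h1 h2, if_neg hj, add_zero]

lemma sigma_eq (r : ℕ) (J : Finset ℕ) {i k : ℕ} (h1 : 1 ≤ i) (hik : i ≤ k) (hkr : k ≤ r) :
    sigmaSign J i k = -(epsSign r J i * epsSign r J (k+1)) := by
  have hIoc : Finset.Icc (k+1) r = Finset.Ioc k r := by
    ext x; simp [Finset.mem_Icc, Finset.mem_Ioc]
  have hunion : Finset.Icc i k ∪ Finset.Ioc k r = Finset.Icc i r := by
    ext x; simp [Finset.mem_Icc, Finset.mem_Ioc, Finset.mem_union]; omega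
  have hdisj : Disjoint (Finset.Icc i k ∩ J) (Finset.Ioc k r ∩ J) := by
    rw [Finset.disjoint_left]
    intro x hx hx'
    simp only [Finset.mem_inter, Finset.mem_Icc, Finset.mem_Ioc] at hx hx'
    omega
  have hcard : (Finset.Icc i r ∩ J).card
      = (Finset.Icc i k ∩ J).card + (Finset.Ioc k r ∩ J).card := by
    rw [← hunion, Finset.union_inter_distrib_right,
      Finset.card_union_of_disjoint hdisj]
  unfold sigmaSign epsSign
  rw [hIoc, hcard, pow_add]
  have hsq : ((-1:ℤ)) ^ ((Finset.Ioc k r ∩ J).card * 2) = 1 := by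
    rw [pow_mul', neg_one_sq, one_pow]
  rcases Nat.even_or_odd ((Finset.Icc i k ∩ J).card) with h | h
  · rw [if_neg (Nat.not_odd_iff_even.mpr h), h.neg_one_pow]
    ring_nf
    rw [hsq]
  · rw [if_pos h, h.neg_one_pow]
    ring_nf
    rw [hsq]

lemma AA_zero (r : ℕ) (J : Finset ℕ) : AA r J 0 = 0 := by
  unfold AA
  rw [Finset.Icc_eq_empty (by omega)]
  simp

lemma AA_succ (r : ℕ) (J : Finset ℕ) (j : ℕ) :
    AA r J (j+1) = AA r J j + epsSign r J (j+1) := by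
  unfold AA
  exact Finset.sum_Icc_succ_top (by omega) _

lemma LL_top (r : ℕ) (J : Finset ℕ) : LL r J (r+1) = 0 := by
  unfold LL; ring

lemma ell_eq (r : ℕ) (J : Finset ℕ) {j : ℕ} (h1 : 1 ≤ j) (h2 : j ≤ r) :
    ellInt r J j = LL r J j := by
  have hstep : ∀ i ∈ Finset.Icc 1 j, ∀ k ∈ Finset.Icc j r,
      sigmaSign J i k = -(epsSign r J i * epsSign r J (k+1)) := by
    intro i hi k hk
    simp only [Finset.mem_Icc] at hi hk
    exact sigma_eq r J hi.1 (le_trans hi.2 hk.1) hk.2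
  have h3 : ellInt r J j
      = -((∑ i ∈ Finset.Icc 1 j, epsSign r J i) * (∑ k ∈ Finset.Icc j r, epsSign r J (k+1))) := by
    unfold ellInt
    rw [Finset.sum_mul_sum]
    rw [← Finset.sum_neg_distrib]
    apply Finset.sum_congr rfl
    intro i hi
    rw [← Finset.sum_neg_distrib]
    apply Finset.sum_congr rfl
    intro k hk
    exact hstep i hi k hk
  have hshift : (∑ k ∈ Finset.Icc j r, epsSign r J (k+1))
      = ∑ k ∈ Finset.Icc (j+1) (r+1), epsSign r J k := by
    rw [← Finset.map_add_right_Icc j r 1]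
    rw [Finset.sum_map]
    rfl
  have hsplit : AA r J (r+1) = AA r J j + ∑ k ∈ Finset.Icc (j+1) (r+1), epsSign r J k := by
    unfold AA
    rw [← Finset.sum_union]
    · congr 1
      ext x; simp [Finset.mem_Icc, Finset.mem_union]; omega
    · rw [Finset.disjoint_left]
      intro x hx hx'
      simp only [Finset.mem_Icc] at hx hx'
      omega
  rw [h3, hshift]
  unfold LL
  have : (∑ k ∈ Finset.Icc (j+1) (r+1), epsSign r J k) = AA r J (r+1) - AA r J j := by
    omega
  rw [this]
  unfold AA
  ring



lemma AA_parity (r : ℕ) (J : Finset ℕ) : ∀ m : ℕ, (Even (AA r J m) ↔ Even m) := by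
  intro m
  induction m with
  | zero => simp [AA_zero]
  | succ k ih =>
    rw [AA_succ]
    constructor
    · intro h
      rcases Nat.even_or_odd (k+1) with h' | h'
      · exact h'
      · exfalso
        have hk : Even k := by
          rcases Nat.even_or_odd k with hk | hk
          · exact hk
          · exfalso
            obtain ⟨t, ht⟩ := hk
            obtain ⟨u, hu⟩ := h'
            omega
        have : Even (AA r J k) := ih.mpr hk
        have hodd : ¬ Even (epsSign r J (k+1)) := by
          rcases eps_cases r J (k+1) with he | he <;> rw [he] <;>
            exact fun ⟨x, hx⟩ => by omega
        rw [Int.even_add] at h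
        exact hodd (h.mp this)
    · intro h
      have hk : ¬ Even k := by
        intro hk
        rw [Nat.even_add_one] at h; exact h hk
      have hA : ¬ Even (AA r J k) := fun hh => hk (ih.mp hh)
      have hodd : ¬ Even (epsSign r J (k+1)) := by
        rcases eps_cases r J (k+1) with he | he <;> rw [he] <;>
          exact fun ⟨x, hx⟩ => by omega
      rw [Int.even_add]
      exact ⟨fun h' => absurd h' hA, fun h' => absurd h' hodd⟩

lemma S_odd (r : ℕ) (J : Finset ℕ) (hr : 1 ≤ r) (h : Even (ellInt r J 1)) :
    ¬ Even (AA r J (r+1)) := by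
  have h1 : ellInt r J 1 = LL r J 1 := ell_eq r J le_rfl hr
  have hA1 : AA r J 1 = epsSign r J 1 := by
    unfold AA; rw [Finset.Icc_self, Finset.sum_singleton]
  intro hS
  obtain ⟨s, hs⟩ := hS
  rw [h1] at h
  unfold LL at h
  rw [hA1, hs] at h
  rcases eps_cases r J 1 with he | he <;>
    rw [he] at h <;> 
    · obtain ⟨t, ht⟩ := h
      omega

lemma r_even (r : ℕ) (J : Finset ℕ) (hr : 1 ≤ r) (h : Even (ellInt r J 1)) :
    Even r := by
  have := S_odd r J hr h
  rw [AA_parity] at this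
  rcases Nat.even_or_odd r with h' | h'
  · exact h'
  · exfalso
    apply this
    obtain ⟨t, ht⟩ := h'
    exact ⟨t+1, by omega⟩

lemma LL_succ (r : ℕ) (J : Finset ℕ) (i : ℕ) :
    LL r J (i+1) = LL r J i
      + epsSign r J (i+1) * (2 * AA r J i + epsSign r J (i+1) - AA r J (r+1)) := by
  unfold LL
  rw [AA_succ]
  ring

lemma row_sum (n r : ℕ) (J : Finset ℕ) {i : ℕ} (h1 : 1 ≤ i) (h2 : i ≤ r) :
    ∑ j ∈ Finset.Icc 1 r, uEntry n r J i j * ellInt r J j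
      = uEntry n r J i i * LL r J i - epsSign r J (i+1) * LL r J (i+1) := by
  rcases eq_or_lt_of_le h2 with hir | hir
  · subst hir
    rw [Finset.sum_eq_single_of_mem i (by simp [Finset.mem_Icc]; omega)]
    · rw [ell_eq i J h1 le_rfl, LL_top]
      ring
    · intro b hb hbne
      have : uEntry n i J i b = 0 := by
        unfold uEntry
        rw [if_neg hbne, if_neg ?_]
        simp only [Finset.mem_Icc] at hb
        omega
      rw [this, zero_mul]
  · have hsub : ({i, i+1} : Finset ℕ) ⊆ Finset.Icc 1 r := by
      intro x hx
      simp only [Finset.mem_insert, Finset.mem_singleton] at hx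
      simp only [Finset.mem_Icc]
      omega
    rw [← Finset.sum_subset hsub ?_]
    · rw [Finset.sum_pair (by omega)]
      have hu1 : uEntry n r J i (i+1) = -epsSign r J (i+1) := by
        unfold uEntry
        rw [if_neg (by omega), if_pos rfl]
      rw [hu1, ell_eq r J h1 (le_of_lt hir), ell_eq r J (by omega) hir]
      ring
    · intro x hx hxne
      simp only [Finset.mem_insert, Finset.mem_singleton] at hxne
      push_neg at hxne
      have : uEntry n r J i x = 0 := by
        unfold uEntry
        rw [if_neg hxne.1, if_neg hxne.2]
      rw [this, zero_mul]

lemma raw_dvd (n N r : ℕ) (J : Finset ℕ) (hN : N = 2*n) {i : ℕ} (h1 : 1 ≤ i) (h2 : i ≤ r)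
    (hb : ellInt r J i + ∑ j ∈ Finset.Icc 1 r, uEntry n r J i j * ellInt r J j
          ≡ -2 * uEntry n r J i i [ZMOD (N : ℤ)]) :
    (N:ℤ) ∣ (1 + uEntry n r J i i) * LL r J i
        - epsSign r J (i+1) * LL r J (i+1) + 2 * uEntry n r J i i := by
  have h' := hb.dvd
  rw [row_sum n r J h1 h2, ell_eq r J h1 h2] at h'
  have h2' := (dvd_neg (α := ℤ)).mpr h'
  have heq : -(-2 * uEntry n r J i i -
      (LL r J i + (uEntry n r J i i * LL r J i - epsSign r J (i+1) * LL r J (i+1))))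
      = (1 + uEntry n r J i i) * LL r J i
        - epsSign r J (i+1) * LL r J (i+1) + 2 * uEntry n r J i i := by ring
  rwa [heq] at h2'

lemma uEntry_diag_mem (n r : ℕ) (J : Finset ℕ) {i : ℕ} (h : i ∈ J) :
    uEntry n r J i i = (n : ℤ) := by
  unfold uEntry; rw [if_pos rfl, if_pos h]

lemma uEntry_diag_not_mem (n r : ℕ) (J : Finset ℕ) {i : ℕ} (h : i ∉ J) :
    uEntry n r J i i = epsSign r J (i+1) := by
  unfold uEntry; rw [if_pos rfl, if_neg h]

/-- cleaned condition for i ∈ J -/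
lemma memJ_dvd (n N r : ℕ) (J : Finset ℕ) (hN : N = 2*n) {i : ℕ} (h1 : 1 ≤ i) (h2 : i ≤ r)
    (hmem : i ∈ J) (heven : Even (LL r J i))
    (hb : ellInt r J i + ∑ j ∈ Finset.Icc 1 r, uEntry n r J i j * ellInt r J j
          ≡ -2 * uEntry n r J i i [ZMOD (N : ℤ)]) :
    (N:ℤ) ∣ LL r J i - epsSign r J (i+1) * LL r J (i+1) := by
  have hraw := raw_dvd n N r J hN h1 h2 hb
  rw [uEntry_diag_mem n r J hmem] at hraw
  obtain ⟨t, ht⟩ := heven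
  have hdvd2 : (N:ℤ) ∣ (n:ℤ) * (LL r J i + 2) := by
    refine ⟨t + 1, ?_⟩
    rw [ht, hN]
    push_cast
    ring
  have := dvd_sub hraw hdvd2
  have heq : (1 + (n:ℤ)) * LL r J i - epsSign r J (i+1) * LL r J (i+1) + 2 * (n:ℤ)
      - (n:ℤ) * (LL r J i + 2) = LL r J i - epsSign r J (i+1) * LL r J (i+1) := by ring
  rwa [heq] at this

/-- cleaned condition for i ∉ J -/
lemma not_memJ_dvd (n N r : ℕ) (J : Finset ℕ) (hN : N = 2*n) {i : ℕ} (h1 : 1 ≤ i) (h2 : i ≤ r)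
    (hmem : i ∉ J)
    (hb : ellInt r J i + ∑ j ∈ Finset.Icc 1 r, uEntry n r J i j * ellInt r J j
          ≡ -2 * uEntry n r J i i [ZMOD (N : ℤ)]) :
    (N:ℤ) ∣ (epsSign r J (i+1) + 1) * LL r J i - LL r J (i+1) + 2 := by
  have hraw := raw_dvd n N r J hN h1 h2 hb
  rw [uEntry_diag_not_mem n r J hmem] at hraw
  have hmul := Dvd.dvd.mul_left hraw (epsSign r J (i+1))
  have hsq := eps_sq r J (i+1)
  have heq : epsSign r J (i+1) * ((1 + epsSign r J (i+1)) * LL r J i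
      - epsSign r J (i+1) * LL r J (i+1) + 2 * epsSign r J (i+1))
      = (epsSign r J (i+1) + 1) * LL r J i - LL r J (i+1) + 2 := by
    linear_combination (LL r J i - LL r J (i+1) + 2) * hsq
  rwa [heq] at hmul

/-- Valley condition -/
lemma shape_V (n N r : ℕ) (J : Finset ℕ) (hN : N = 2*n) {i : ℕ} (h1 : 1 ≤ i) (h2 : i ≤ r)
    (hmem : i ∈ J) (he : epsSign r J (i+1) = 1) (heven : Even (LL r J i))
    (hb : ellInt r J i + ∑ j ∈ Finset.Icc 1 r, uEntry n r J i j * ellInt r J j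
          ≡ -2 * uEntry n r J i i [ZMOD (N : ℤ)]) :
    (N:ℤ) ∣ AA r J (r+1) - 1 - 2 * AA r J i := by
  have h := memJ_dvd n N r J hN h1 h2 hmem heven hb
  have heq : LL r J i - epsSign r J (i+1) * LL r J (i+1)
      = AA r J (r+1) - 1 - 2 * AA r J i := by
    rw [LL_succ, he]; ring
  rwa [heq] at h

/-- Peak condition -/
lemma shape_P (n N r : ℕ) (J : Finset ℕ) (hN : N = 2*n) {i : ℕ} (h1 : 1 ≤ i) (h2 : i ≤ r)
    (hmem : i ∈ J) (he : epsSign r J (i+1) = -1) (heven : Even (LL r J i))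
    (hb : ellInt r J i + ∑ j ∈ Finset.Icc 1 r, uEntry n r J i j * ellInt r J j
          ≡ -2 * uEntry n r J i i [ZMOD (N : ℤ)]) :
    (N:ℤ) ∣ 2 * LL r J i - 2 * AA r J i + 1 + AA r J (r+1) := by
  have h := memJ_dvd n N r J hN h1 h2 hmem heven hb
  have heq : LL r J i - epsSign r J (i+1) * LL r J (i+1)
      = 2 * LL r J i - 2 * AA r J i + 1 + AA r J (r+1) := by
    rw [LL_succ, he]; ring
  rwa [heq] at h

/-- Up-flat condition -/
lemma shape_U (n N r : ℕ) (J : Finset ℕ) (hN : N = 2*n) {i : ℕ} (h1 : 1 ≤ i) (h2 : i ≤ r)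
    (hmem : i ∉ J) (he : epsSign r J (i+1) = 1)
    (hb : ellInt r J i + ∑ j ∈ Finset.Icc 1 r, uEntry n r J i j * ellInt r J j
          ≡ -2 * uEntry n r J i i [ZMOD (N : ℤ)]) :
    (N:ℤ) ∣ LL r J i - 2 * AA r J i + 1 + AA r J (r+1) := by
  have h := not_memJ_dvd n N r J hN h1 h2 hmem hb
  have heq : (epsSign r J (i+1) + 1) * LL r J i - LL r J (i+1) + 2
      = LL r J i - 2 * AA r J i + 1 + AA r J (r+1) := by
    rw [LL_succ, he]; ring
  rwa [heq] at h

/-- Down-flat condition -/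
lemma shape_D (n N r : ℕ) (J : Finset ℕ) (hN : N = 2*n) {i : ℕ} (h1 : 1 ≤ i) (h2 : i ≤ r)
    (hmem : i ∉ J) (he : epsSign r J (i+1) = -1)
    (hb : ellInt r J i + ∑ j ∈ Finset.Icc 1 r, uEntry n r J i j * ellInt r J j
          ≡ -2 * uEntry n r J i i [ZMOD (N : ℤ)]) :
    (N:ℤ) ∣ LL r J (i+1) - 2 := by
  have h := not_memJ_dvd n N r J hN h1 h2 hmem hb
  rw [he] at h
  have h2' := (dvd_neg (α := ℤ)).mpr h
  have heq : -((-1 + 1) * LL r J i - LL r J (i+1) + 2) = LL r J (i+1) - 2 := by ring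
  rwa [heq] at h2'

/-- Tail propagation: if everything in `(i, r]` is in `J`, the path alternates at the top. -/
lemma tail_prop (r : ℕ) (J : Finset ℕ) (i : ℕ)
    (h : ∀ j, i < j → j ≤ r → j ∈ J) :
    ∀ k, k ≤ r - i →
      AA r J (r+1-k) = AA r J (r+1) - (k % 2 : ℕ) ∧ epsSign r J (r+1-k) = (-1)^k := by
  intro k
  induction k with
  | zero => intro _; simp [eps_top]
  | succ k ih =>
    intro hk
    have hkr : k + 1 ≤ r - i := hk
    have ihk := ih (by omega)
    have hj1 : 1 ≤ r - k := by omega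
    have hj2 : r - k ≤ r := by omega
    have hjJ : r - k ∈ J := h (r-k) (by omega) hj2
    have heps : epsSign r J (r-k) = - epsSign r J (r-k+1) := eps_succ_mem r J hj1 hj2 hjJ
    have hidx : r - k + 1 = r + 1 - k := by omega
    have hidx2 : r + 1 - (k+1) = r - k := by omega
    rw [hidx] at heps
    have hAs : AA r J (r+1-k) = AA r J (r-k) + epsSign r J (r+1-k) := by
      have := AA_succ r J (r-k)
      rw [hidx] at this
      exact this
    constructor
    · rw [hidx2]
      have : AA r J (r-k) = AA r J (r+1-k) - epsSign r J (r+1-k) := by omega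
      rw [this, ihk.1, ihk.2]
      rcases Nat.even_or_odd k with hke | hko
      · rw [hke.neg_one_pow]
        have h1 : (k % 2 : ℕ) = 0 := Nat.even_iff.mp hke
        have h2 : ((k+1) % 2 : ℕ) = 1 := by omega
        rw [h1, h2]; push_cast; ring
      · rw [hko.neg_one_pow]
        have h1 : (k % 2 : ℕ) = 1 := Nat.odd_iff.mp hko
        have h2 : ((k+1) % 2 : ℕ) = 0 := by omega
        rw [h1, h2]; push_cast; ring
    · rw [hidx2, heps, ihk.2, pow_succ]
      ring

/-- Head propagation: if everything in `[1, i0)` is in `J`, the path alternates at the bottom. -/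
lemma head_prop (r : ℕ) (J : Finset ℕ) (i0 : ℕ) (hi0 : i0 ≤ r + 1)
    (h : ∀ j, 1 ≤ j → j < i0 → j ∈ J) :
    ∀ j ≤ i0, (AA r J j = epsSign r J 1 * (j % 2 : ℕ) ∧
      (1 ≤ j → epsSign r J j = (-1)^(j+1) * epsSign r J 1)) := by
  intro j
  induction j with
  | zero => intro _; simp [AA_zero]
  | succ j ih =>
    intro hj
    have ihj := ih (by omega)
    have heps : epsSign r J (j+1) = (-1)^(j+1+1) * epsSign r J 1 := by
      rcases Nat.eq_zero_or_pos j with hj0 | hjpos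
      · subst hj0; norm_num
      · have hjJ : j ∈ J := h j hjpos (by omega)
        have hjr : j ≤ r := by omega
        have := eps_succ_mem r J hjpos hjr hjJ
        have heq : epsSign r J (j+1) = - epsSign r J j := by omega
        rw [heq, ihj.2 hjpos, pow_succ]
        ring
    refine ⟨?_, fun _ => heps⟩
    rw [AA_succ, ihj.1, heps]
    rcases Nat.even_or_odd j with hje | hjo
    · have he2 : Even (j+1+1) := by
        obtain ⟨t, ht⟩ := hje; exact ⟨t+1, by omega⟩
      rw [he2.neg_one_pow]
      have h1 : (j % 2 : ℕ) = 0 := Nat.even_iff.mp hje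
      have h2 : ((j+1) % 2 : ℕ) = 1 := by omega
      rw [h1, h2]; push_cast; ring
    · have ho2 : Odd (j+1+1) := by
        obtain ⟨t, ht⟩ := hjo; exact ⟨t+1, by omega⟩
      rw [ho2.neg_one_pow]
      have h1 : (j % 2 : ℕ) = 1 := Nat.odd_iff.mp hjo
      have h2 : ((j+1) % 2 : ℕ) = 0 := by omega
      rw [h1, h2]; push_cast; ring

lemma forward_full (n N r : ℕ) (hn : 2 ≤ n) (hN : N = 2*n) (hr : 2 ≤ r)
    (J : Finset ℕ) (hJ : J ⊆ Finset.Icc 1 r)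
    (hA : ∀ j ∈ Finset.Icc 1 r, Even (ellInt r J j))
    (hB : ∀ i ∈ Finset.Icc 1 r,
        ellInt r J i + ∑ j ∈ Finset.Icc 1 r, uEntry n r J i j * ellInt r J j
          ≡ -2 * uEntry n r J i i [ZMOD (N : ℤ)]) :
    J = Finset.Icc 1 r := by
  classical
  by_contra hne
  -- basic numeric facts
  have hn2 : (2:ℤ) ≤ (n:ℤ) := by exact_mod_cast hn
  have hdvdnN : (n:ℤ) ∣ (N:ℤ) := ⟨2, by rw [hN]; push_cast; ring⟩
  have toN : ∀ {x : ℤ}, (N:ℤ) ∣ x → (n:ℤ) ∣ x := fun hx => dvd_trans hdvdnN hx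
  have half : ∀ {x : ℤ}, (N:ℤ) ∣ 2*x → (n:ℤ) ∣ x := by
    rintro x ⟨t, ht⟩
    refine ⟨t, ?_⟩
    have h2 : (2:ℤ) * x = 2 * ((n:ℤ)*t) := by rw [ht, hN]; push_cast; ring
    exact mul_left_cancel₀ two_ne_zero h2
  have no1 : ¬ ((n:ℤ) ∣ 1) := by
    intro h
    have := Int.le_of_dvd one_pos h
    omega
  -- parity facts
  have hEv := r_even r J (by omega) (hA 1 (by simp [Finset.mem_Icc]; omega))
  have hSodd := S_odd r J (by omega) (hA 1 (by simp [Finset.mem_Icc]; omega))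
  have hLe : ∀ i, 1 ≤ i → i ≤ r → Even (LL r J i) := by
    intro i h1 h2
    have := hA i (by simp [Finset.mem_Icc]; omega)
    rwa [ell_eq r J h1 h2] at this
  have hBr : ∀ i, 1 ≤ i → i ≤ r →
      ellInt r J i + ∑ j ∈ Finset.Icc 1 r, uEntry n r J i j * ellInt r J j
        ≡ -2 * uEntry n r J i i [ZMOD (N : ℤ)] := by
    intro i h1 h2
    exact hB i (by simp [Finset.mem_Icc]; omega)
  -- non-J elements
  have hex : ((Finset.Icc 1 r) \ J).Nonempty := by
    rcases Finset.eq_empty_or_nonempty ((Finset.Icc 1 r) \ J) with h | h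
    · exfalso
      apply hne
      apply Finset.Subset.antisymm hJ
      intro x hx
      by_contra hxJ
      have : x ∈ (Finset.Icc 1 r) \ J := Finset.mem_sdiff.mpr ⟨hx, hxJ⟩
      rw [h] at this
      exact absurd this (Finset.notMem_empty x)
    · exact h
  set S : ℤ := AA r J (r+1) with hSdef
  set istar := ((Finset.Icc 1 r) \ J).max' hex with histar
  have histar_mem := ((Finset.Icc 1 r) \ J).max'_mem hex
  rw [Finset.mem_sdiff, Finset.mem_Icc] at histar_mem
  obtain ⟨⟨histar1, histar2⟩, histarJ⟩ := histar_mem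
  have htailmem : ∀ j, istar < j → j ≤ r → j ∈ J := by
    intro j hj1 hj2
    by_contra hjJ
    have : j ∈ (Finset.Icc 1 r) \ J := by
      rw [Finset.mem_sdiff, Finset.mem_Icc]
      exact ⟨⟨by omega, hj2⟩, hjJ⟩
    have := Finset.le_max' _ j this
    omega
  have htail := tail_prop r J istar htailmem
  rcases eq_or_lt_of_le histar2 with hcase | hcase
  · -- CASE B : istar = r
    have hrJ : r ∉ J := by rwa [hcase] at histarJ
    have heR : epsSign r J (r+1) = 1 := eps_top r J
    have hAr : AA r J r = S - 1 := by
      have := AA_succ r J r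
      rw [heR, ← hSdef] at this
      omega
    have hUr := shape_U n N r J hN (i := r) (by omega) le_rfl hrJ heR
      (hBr r (by omega) le_rfl)
    have hUrval : LL r J r - 2 * AA r J r + 1 + S = 2*(2 - S) := by
      simp only [LL]
      rw [hAr, ← hSdef]
      ring
    rw [hUrval] at hUr
    have hn2S : (n:ℤ) ∣ 2 - S := half hUr
    -- the first flat
    set i0 := ((Finset.Icc 1 r) \ J).min' hex with hi0def
    have hi0_mem := ((Finset.Icc 1 r) \ J).min'_mem hex
    rw [Finset.mem_sdiff, Finset.mem_Icc] at hi0_mem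
    obtain ⟨⟨hi01, hi02⟩, hi0J⟩ := hi0_mem
    have hheadmem : ∀ j, 1 ≤ j → j < i0 → j ∈ J := by
      intro j hj1 hj2
      by_contra hjJ
      have hjr : j ≤ r := by omega
      have : j ∈ (Finset.Icc 1 r) \ J := by
        rw [Finset.mem_sdiff, Finset.mem_Icc]
        exact ⟨⟨hj1, hjr⟩, hjJ⟩
      have := Finset.min'_le _ j this
      omega
    have hh := head_prop r J i0 (by omega) hheadmem
    obtain ⟨hAi0, hEfun⟩ := hh i0 le_rfl
    have hEi0 := hEfun hi01
    set e := epsSign r J 1 with hedef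
    rcases eq_or_lt_of_le hi02 with hcase2 | hcase2
    · -- B0 : i0 = r, full alternation below
      have hr2 : r % 2 = 0 := Nat.even_iff.mp hEv
      have hi0r : i0 = r := hcase2
      rw [hi0r, hr2] at hAi0
      simp at hAi0
      rw [hAi0] at hAr
      have hS1 : S = 1 := by omega
      rw [hS1] at hn2S
      exact no1 (by simpa using hn2S)
    · -- B1 : i0 < r
      have hEnext : epsSign r J (i0+1) = epsSign r J i0 :=
        (eps_succ_not_mem r J hi01 hi02 hi0J).symm
      have hAs1 : AA r J (i0+1) = AA r J i0 + epsSign r J (i0+1) := AA_succ r J i0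
      have hAs2 : AA r J (i0+2) = AA r J (i0+1) + epsSign r J (i0+2) :=
        AA_succ r J (i0+1)
      -- helper for combining with 2 - S
      have comb1 : (n:ℤ) ∣ 1 - S → False := by
        intro h
        apply no1
        have := dvd_sub hn2S h
        rwa [show (2 - S) - (1 - S) = (1:ℤ) by ring] at this
      have comb2 : (n:ℤ) ∣ S - 1 → False := by
        intro h
        apply no1
        have := dvd_add hn2S h
        rwa [show (2 - S) + (S - 1) = (1:ℤ) by ring] at this
      have comb3 : (n:ℤ) ∣ 5 - 3*S → False := by
        intro h
        apply no1
        have h3 := Dvd.dvd.mul_left hn2S 3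
        have := dvd_sub h3 h
        rwa [show 3*(2 - S) - (5 - 3*S) = (1:ℤ) by ring] at this
      have hnS1 : (n:ℤ) ∣ S + 1 → ((n:ℤ) ∣ 3) := by
        intro h
        have := dvd_add hn2S h
        rwa [show (2 - S) + (S + 1) = (3:ℤ) by ring] at this
      rcases Nat.even_or_odd i0 with hpar | hpar
      · -- i0 even
        have hpow : ((-1:ℤ))^(i0+1) = -1 := by
          have : Odd (i0+1) := by obtain ⟨t, ht⟩ := hpar; exact ⟨t, by omega⟩
          exact this.neg_one_pow
        have hm0 : (i0 % 2 : ℕ) = 0 := Nat.even_iff.mp hpar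
        have hA0 : AA r J i0 = 0 := by rw [hAi0, hm0]; simp
        rcases eps_cases r J 1 with he | he
        · -- e = 1 : down-flat at i0 with A(i0+1) = -1
          have hEi0v : epsSign r J i0 = -1 := by
            rw [hEi0, hpow, hedef, he]; ring
          have hEn : epsSign r J (i0+1) = -1 := by rw [hEnext, hEi0v]
          have hA1 : AA r J (i0+1) = -1 := by rw [hAs1, hA0, hEn]; ring
          have hD := shape_D n N r J hN hi01 (by omega) hi0J hEn
            (hBr i0 hi01 (by omega))
          have hval : LL r J (i0+1) - 2 = S - 1 := by
            simp only [LL]; rw [hA1, ← hSdef]; ring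
          rw [hval] at hD
          exact comb2 (toN hD)
        · -- e = -1 : up-flat at i0 with A i0 = 0
          have hEi0v : epsSign r J i0 = 1 := by
            rw [hEi0, hpow, hedef, he]; ring
          have hEn : epsSign r J (i0+1) = 1 := by rw [hEnext, hEi0v]
          have hU := shape_U n N r J hN hi01 (by omega) hi0J hEn
            (hBr i0 hi01 (by omega))
          have hval : LL r J i0 - 2 * AA r J i0 + 1 + S = S + 1 := by
            simp only [LL]; rw [hA0, ← hSdef]; ring
          rw [hval] at hU
          have hn3 := hnS1 (toN hU)
          have hA1 : AA r J (i0+1) = 1 := by rw [hAs1, hA0, hEn]; ring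
          by_cases hmem1 : i0 + 1 ∈ J
          · -- peak at i0+1 with A = 1
            have hE2 : epsSign r J (i0+2) = -1 := by
              have := eps_succ_mem r J (j := i0+1) (by omega) (by omega) hmem1
              rw [show i0+1+1 = i0+2 by omega] at this
              rw [hEn] at this
              omega
            have hP := shape_P n N r J hN (i := i0+1) (by omega) (by omega) hmem1
              (by rw [show i0+1+1 = i0+2 by omega]; exact hE2)
              (hLe (i0+1) (by omega) (by omega))
              (hBr (i0+1) (by omega) (by omega))
            have hval2 : 2 * LL r J (i0+1) - 2 * AA r J (i0+1) + 1 + S = 1 - S := by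
              simp only [LL]; rw [hA1, ← hSdef]; ring
            rw [hval2] at hP
            exact comb1 (toN hP)
          · -- up-flat at i0+1 (vacuous), go further
            have hE2 : epsSign r J (i0+2) = 1 := by
              have := eps_succ_not_mem r J (j := i0+1) (by omega) (by omega) hmem1
              rw [show i0+1+1 = i0+2 by omega] at this
              rw [← this, hEn]
            rcases eq_or_lt_of_le (show i0 + 1 ≤ r by omega) with hir | hir
            · -- i0+1 = r : A r = 1 = S - 1, S = 2 contradicts S odd
              rw [hir] at hA1
              rw [hA1] at hAr
              exact hSodd ⟨1, by omega⟩
            · have hA2v : AA r J (i0+2) = 2 := by rw [hAs2, hA1, hE2]; ring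
              by_cases hmem2 : i0 + 2 ∈ J
              · have hE3 : epsSign r J (i0+3) = -1 := by
                  have := eps_succ_mem r J (j := i0+2) (by omega) (by omega) hmem2
                  rw [show i0+2+1 = i0+3 by omega] at this
                  rw [hE2] at this
                  omega
                have hP := shape_P n N r J hN (i := i0+2) (by omega) (by omega) hmem2
                  (by rw [show i0+2+1 = i0+3 by omega]; exact hE3)
                  (hLe (i0+2) (by omega) (by omega))
                  (hBr (i0+2) (by omega) (by omega))
                have hval2 : 2 * LL r J (i0+2) - 2 * AA r J (i0+2) + 1 + S = 5 - 3*S := by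
                  simp only [LL]; rw [hA2v, ← hSdef]; ring
                rw [hval2] at hP
                exact comb3 (toN hP)
              · have hE3 : epsSign r J (i0+3) = 1 := by
                  have := eps_succ_not_mem r J (j := i0+2) (by omega) (by omega) hmem2
                  rw [show i0+2+1 = i0+3 by omega] at this
                  rw [← this, hE2]
                have hU2 := shape_U n N r J hN (i := i0+2) (by omega) (by omega) hmem2
                  (by rw [show i0+2+1 = i0+3 by omega]; exact hE3)
                  (hBr (i0+2) (by omega) (by omega))
                have hval2 : LL r J (i0+2) - 2 * AA r J (i0+2) + 1 + S = 1 - S := by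
                  simp only [LL]; rw [hA2v, ← hSdef]; ring
                rw [hval2] at hU2
                exact comb1 (toN hU2)
      · -- i0 odd
        have hpow : ((-1:ℤ))^(i0+1) = 1 := by
          have : Even (i0+1) := by obtain ⟨t, ht⟩ := hpar; exact ⟨t+1, by omega⟩
          exact this.neg_one_pow
        have hm0 : (i0 % 2 : ℕ) = 1 := Nat.odd_iff.mp hpar
        rcases eps_cases r J 1 with he | he
        · -- e = 1 : A i0 = 1, up-flat at i0 (vacuous), look at i0+1
          have hA0 : AA r J i0 = 1 := by rw [hAi0, hm0, hedef, he]; simp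
          have hEi0v : epsSign r J i0 = 1 := by
            rw [hEi0, hpow, hedef, he]; ring
          have hEn : epsSign r J (i0+1) = 1 := by rw [hEnext, hEi0v]
          have hA1 : AA r J (i0+1) = 2 := by rw [hAs1, hA0, hEn]; ring
          by_cases hmem1 : i0 + 1 ∈ J
          · have hE2 : epsSign r J (i0+2) = -1 := by
              have := eps_succ_mem r J (j := i0+1) (by omega) (by omega) hmem1
              rw [show i0+1+1 = i0+2 by omega] at this
              rw [hEn] at this
              omega
            have hP := shape_P n N r J hN (i := i0+1) (by omega) (by omega) hmem1
              (by rw [show i0+1+1 = i0+2 by omega]; exact hE2)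
              (hLe (i0+1) (by omega) (by omega))
              (hBr (i0+1) (by omega) (by omega))
            have hval2 : 2 * LL r J (i0+1) - 2 * AA r J (i0+1) + 1 + S = 5 - 3*S := by
              simp only [LL]; rw [hA1, ← hSdef]; ring
            rw [hval2] at hP
            exact comb3 (toN hP)
          · have hE2 : epsSign r J (i0+2) = 1 := by
              have := eps_succ_not_mem r J (j := i0+1) (by omega) (by omega) hmem1
              rw [show i0+1+1 = i0+2 by omega] at this
              rw [← this, hEn]
            have hU2 := shape_U n N r J hN (i := i0+1) (by omega) (by omega) hmem1
              (by rw [show i0+1+1 = i0+2 by omega]; exact hE2)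
              (hBr (i0+1) (by omega) (by omega))
            have hval2 : LL r J (i0+1) - 2 * AA r J (i0+1) + 1 + S = 1 - S := by
              simp only [LL]; rw [hA1, ← hSdef]; ring
            rw [hval2] at hU2
            exact comb1 (toN hU2)
        · -- e = -1 : A i0 = -1, down-flat at i0
          have hA0 : AA r J i0 = -1 := by rw [hAi0, hm0, hedef, he]; simp
          have hEi0v : epsSign r J i0 = -1 := by
            rw [hEi0, hpow, hedef, he]; ring
          have hEn : epsSign r J (i0+1) = -1 := by rw [hEnext, hEi0v]
          have hA1 : AA r J (i0+1) = -2 := by rw [hAs1, hA0, hEn]; ring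
          have hD := shape_D n N r J hN hi01 (by omega) hi0J hEn
            (hBr i0 hi01 (by omega))
          have hval : LL r J (i0+1) - 2 = 2*(S + 1) := by
            simp only [LL]; rw [hA1, ← hSdef]; ring
          rw [hval] at hD
          have hnS1' : (n:ℤ) ∣ S + 1 := half hD
          have hn3 := hnS1 hnS1'
          by_cases hmem1 : i0 + 1 ∈ J
          · -- valley at i0+1 with A = -2
            have hE2 : epsSign r J (i0+2) = 1 := by
              have := eps_succ_mem r J (j := i0+1) (by omega) (by omega) hmem1
              rw [show i0+1+1 = i0+2 by omega] at this
              rw [hEn] at this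
              omega
            have hV := shape_V n N r J hN (i := i0+1) (by omega) (by omega) hmem1
              (by rw [show i0+1+1 = i0+2 by omega]; exact hE2)
              (hLe (i0+1) (by omega) (by omega))
              (hBr (i0+1) (by omega) (by omega))
            have hval2 : S - 1 - 2 * AA r J (i0+1) = S + 3 := by rw [hA1]; ring
            rw [show AA r J (r+1) = S from rfl, hval2] at hV
            apply no1
            have h2' : (n:ℤ) ∣ 2 := by
              have := dvd_sub (toN hV) hnS1'
              rwa [show (S + 3) - (S + 1) = (2:ℤ) by ring] at this
            have := dvd_sub hn3 h2'
            rwa [show (3:ℤ) - 2 = 1 by ring] at this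
          · -- down-flat at i0+1 with A(i0+2) = -3
            have hE2 : epsSign r J (i0+2) = -1 := by
              have := eps_succ_not_mem r J (j := i0+1) (by omega) (by omega) hmem1
              rw [show i0+1+1 = i0+2 by omega] at this
              rw [← this, hEn]
            have hA2v : AA r J (i0+2) = -3 := by rw [hAs2, hA1, hE2]; ring
            have hD2 := shape_D n N r J hN (i := i0+1) (by omega) (by omega) hmem1
              (by rw [show i0+1+1 = i0+2 by omega]; exact hE2)
              (hBr (i0+1) (by omega) (by omega))
            have hval2 : LL r J (i0+1+1) - 2 = 3*S + 7 := by
              simp only [LL]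
              rw [show i0+1+1 = i0+2 by omega, hA2v, ← hSdef]
              ring
            rw [hval2] at hD2
            apply no1
            have h4 : (n:ℤ) ∣ 4 := by
              have h3' := Dvd.dvd.mul_left hnS1' 3
              have := dvd_sub (toN hD2) h3'
              rwa [show (3*S + 7) - 3*(S + 1) = (4:ℤ) by ring] at this
            have := dvd_sub h4 hn3
            rwa [show (4:ℤ) - 3 = 1 by ring] at this
  · -- CASE A : istar < r
    have hk1 : r - istar ≥ 1 := by omega
    have hidx1 : r + 1 - (r - istar) = istar + 1 := by omega
    obtain ⟨hA1, hE1⟩ := htail (r - istar) (le_refl _)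
    rw [hidx1] at hA1 hE1
    have hidx2 : r + 1 - (r - istar - 1) = istar + 2 := by omega
    obtain ⟨hA2, hE2⟩ := htail (r - istar - 1) (by omega)
    rw [hidx2] at hA2 hE2
    have hAsucc : AA r J (istar + 1) = AA r J istar + epsSign r J (istar+1) :=
      AA_succ r J istar
    have hmem1 : istar + 1 ∈ J := htailmem (istar+1) (by omega) (by omega)
    rcases Nat.even_or_odd (r - istar) with hpar | hpar
    · -- eps(istar+1) = 1 : up-flat at istar, peak at istar+1
      have he1 : epsSign r J (istar+1) = 1 := by rw [hE1, hpar.neg_one_pow]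
      have hm2 : (r - istar) % 2 = 0 := Nat.even_iff.mp hpar
      have hAi1 : AA r J (istar + 1) = S := by rw [hA1, hm2]; simp; rfl
      have hAi : AA r J istar = S - 1 := by
        rw [hAi1, he1] at hAsucc; omega
      -- up-flat condition at istar
      have hU := shape_U n N r J hN histar1 (by omega) histarJ he1
        (hBr istar histar1 (by omega))
      have hUval : LL r J istar - 2 * AA r J istar + 1 + S = 2*(2 - S) := by
        simp only [LL]
        rw [hAi, ← hSdef]
        ring
      rw [hUval] at hU
      have hn1 : (n:ℤ) ∣ 2 - S := half hU
      -- peak condition at istar + 1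
      have hpar2 : Odd (r - istar - 1) := by
        obtain ⟨t, ht⟩ := hpar; exact ⟨t - 1, by omega⟩
      have he2 : epsSign r J (istar+2) = -1 := by rw [hE2, hpar2.neg_one_pow]
      have hP := shape_P n N r J hN (i := istar + 1) (by omega) (by omega) hmem1
        (by rw [show istar + 1 + 1 = istar + 2 by omega]; exact he2)
        (hLe (istar+1) (by omega) (by omega))
        (hBr (istar+1) (by omega) (by omega))
      have hPval : 2 * LL r J (istar+1) - 2 * AA r J (istar+1) + 1 + S = 1 - S := by
        simp only [LL]
        rw [hAi1, ← hSdef]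
        ring
      rw [hPval] at hP
      have hn2' : (n:ℤ) ∣ 1 - S := toN hP
      apply no1
      have := dvd_sub hn1 hn2'
      rwa [show (2 - S) - (1 - S) = (1:ℤ) by ring] at this
    · -- eps(istar+1) = -1 : down-flat at istar, valley at istar+1
      have he1 : epsSign r J (istar+1) = -1 := by rw [hE1, hpar.neg_one_pow]
      have hm2 : (r - istar) % 2 = 1 := Nat.odd_iff.mp hpar
      have hAi1 : AA r J (istar + 1) = S - 1 := by rw [hA1, hm2]; simp; rfl
      -- down-flat condition at istar
      have hD := shape_D n N r J hN histar1 (by omega) histarJ he1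
        (hBr istar histar1 (by omega))
      have hDval : LL r J (istar+1) - 2 = -(S + 1) := by
        simp only [LL]
        rw [hAi1, ← hSdef]
        ring
      rw [hDval] at hD
      have hd1 : (N:ℤ) ∣ S + 1 := (dvd_neg).mp hD
      -- valley condition at istar+1
      have hpar2 : Even (r - istar - 1) := by
        obtain ⟨t, ht⟩ := hpar; exact ⟨t, by omega⟩
      have he2 : epsSign r J (istar+2) = 1 := by rw [hE2, hpar2.neg_one_pow]
      have hV := shape_V n N r J hN (i := istar + 1) (by omega) (by omega) hmem1
        (by rw [show istar + 1 + 1 = istar + 2 by omega]; exact he2)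
        (hLe (istar+1) (by omega) (by omega))
        (hBr (istar+1) (by omega) (by omega))
      have hVval : S - 1 - 2 * AA r J (istar+1) = -(S - 1) := by
        rw [hAi1]; ring
      rw [show AA r J (r+1) = S from rfl, hVval] at hV
      have hd2 : (N:ℤ) ∣ S - 1 := (dvd_neg).mp hV
      have hd3 : (N:ℤ) ∣ 2 := by
        have := dvd_sub hd1 hd2
        rwa [show (S + 1) - (S - 1) = (2:ℤ) by ring] at this
      have := Int.le_of_dvd two_pos hd3
      rw [hN] at this
      push_cast at this
      omega

lemma ell_zero_of_full (r : ℕ) (hr : 2 ≤ r) (hrev : Even r) :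
    ∀ j, 1 ≤ j → j ≤ r → ellInt r (Finset.Icc 1 r) j = 0 := by
  set J := Finset.Icc 1 r with hJdef
  have htailmem : ∀ j, 0 < j → j ≤ r → j ∈ J := by
    intro j h1 h2
    rw [hJdef, Finset.mem_Icc]
    omega
  have htail := tail_prop r J 0 htailmem
  have hr2 : r % 2 = 0 := Nat.even_iff.mp hrev
  have hS1 : AA r J (r+1) = 1 := by
    obtain ⟨hA1, hE1⟩ := htail r (by omega)
    have hidx : r + 1 - r = 1 := by omega
    rw [hidx] at hA1 hE1
    have hA1e : AA r J 1 = epsSign r J 1 := by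
      unfold AA
      rw [Finset.Icc_self, Finset.sum_singleton]
    rw [hA1e, hE1, hrev.neg_one_pow, hr2] at hA1
    push_cast at hA1
    omega
  intro j h1 h2
  obtain ⟨hAj, _⟩ := htail (r + 1 - j) (by omega)
  have hidx : r + 1 - (r + 1 - j) = j := by omega
  rw [hidx, hS1] at hAj
  have hA01 : AA r J j = 0 ∨ AA r J j = 1 := by
    rcases Nat.even_or_odd (r + 1 - j) with hp | hp
    · right; rw [hAj, Nat.even_iff.mp hp]; simp
    · left; rw [hAj, Nat.odd_iff.mp hp]; simp
  rcases hA01 with h | h <;>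
    · rw [ell_eq r J h1 h2]
      simp only [LL]
      rw [h, hS1]
      ring

/-- Conditions (a): `ℓ_j` even for all `j`, and (b): `(Id + u)·ℓ ≡ −2·u_Δ (mod N)`
hold simultaneously if and only if `J = {1,…,r}` and `r` is even. -/
theorem ribbon_conditions_iff (n N r : ℕ) (hn : 2 ≤ n) (hN : N = 2 * n) (hr : 2 ≤ r)
    (J : Finset ℕ) (hJ : J ⊆ Finset.Icc 1 r) (hJne : J.Nonempty) :
    ((∀ j ∈ Finset.Icc 1 r, Even (ellInt r J j)) ∧
      (∀ i ∈ Finset.Icc 1 r,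
        ellInt r J i + ∑ j ∈ Finset.Icc 1 r, uEntry n r J i j * ellInt r J j
          ≡ -2 * uEntry n r J i i [ZMOD (N : ℤ)])) ↔
      (J = Finset.Icc 1 r ∧ Even r) := by
  constructor
  · rintro ⟨hA, hB⟩
    refine ⟨forward_full n N r hn hN hr J hJ hA hB, ?_⟩
    exact r_even r J (by omega) (hA 1 (by simp [Finset.mem_Icc]; omega))
  · rintro ⟨hJfull, hrev⟩
    subst hJfull
    have hz := ell_zero_of_full r hr hrev
    constructor
    · intro j hj
      rw [Finset.mem_Icc] at hj
      rw [hz j hj.1 hj.2]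
      exact Even.zero
    · intro i hi
      rw [Finset.mem_Icc] at hi
      have hsum : ∑ j ∈ Finset.Icc 1 r, uEntry n r (Finset.Icc 1 r) i j
          * ellInt r (Finset.Icc 1 r) j = 0 := by
        apply Finset.sum_eq_zero
        intro j hj
        rw [Finset.mem_Icc] at hj
        rw [hz j hj.1 hj.2, mul_zero]
      rw [hsum, hz i hi.1 hi.2]
      have hu : uEntry n r (Finset.Icc 1 r) i i = (n:ℤ) :=
        uEntry_diag_mem n r _ (Finset.mem_Icc.mpr hi)
      rw [hu]
      have : (N:ℤ) ∣ (-2 * (n:ℤ)) - (0 + 0) := ⟨-1, by rw [hN]; push_cast; ring⟩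
      exact Int.modEq_iff_dvd.mpr this
end

section
/- Assume J = {1,…,r} and r is even (so that u_{i,i} = n for all i and u_{i,i+1} = (−1)^{i+1} for 1 ≤ i ≤ r−1). Then the set of pairs (a, j) ∈ (ℤ/N)^r × (ℤ/N)^r satisfying 2a = 0, 2j = 0, and a = −u_Δ + u·j in (ℤ/N)^r has exactly 2^r elements; explicitly, for every j ∈ {0, n}^r the vector a := −u_Δ + u·j automatically satisfies 2a = 0, and every solution arises this way from a unique such j. (These pairs parametrize the 2^r ribbon elements of the Drinfeld double of the bosonization of the Nichols algebra of super type A(r;q;I) for q of order N.) -/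
lemma two_nsmul_eq_zero_iff (n : ℕ) (hn : 1 ≤ n) (x : ZMod (2 * n)) :
    2 • x = 0 ↔ x = 0 ∨ x = (n : ZMod (2 * n)) := by
  haveI hNZ : NeZero (2 * n) := ⟨by omega⟩
  constructor
  · intro h
    have h2 : ((2 * x.val : ℕ) : ZMod (2 * n)) = 0 := by
      have hx : ((2 * x.val : ℕ) : ZMod (2 * n)) = x + x := by
        push_cast [ZMod.natCast_zmod_val]; ring
      rw [hx, ← two_nsmul]; exact h
    have hdvd : 2 * n ∣ 2 * x.val := (ZMod.natCast_eq_zero_iff _ _).mp h2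
    have hnd : n ∣ x.val := by
      obtain ⟨k, hk⟩ := hdvd
      have hk' : 2 * x.val = 2 * (n * k) := by rw [hk]; ring
      exact ⟨k, by omega⟩
    have hlt : x.val < 2 * n := x.val_lt
    obtain ⟨k, hk⟩ := hnd
    have hk2 : k < 2 := by
      have : n * k < n * 2 := by omega
      exact Nat.lt_of_mul_lt_mul_left this
    interval_cases k
    · left
      rw [← ZMod.natCast_zmod_val x, hk, Nat.mul_zero, Nat.cast_zero]
    · right
      rw [← ZMod.natCast_zmod_val x, hk, Nat.mul_one]
  · rintro (rfl | rfl)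
    · simp
    · rw [two_nsmul, ← Nat.cast_add]
      have h2n : (n + n : ℕ) = 2 * n := by ring
      rw [h2n, ZMod.natCast_self]


/-- Assume `J = {1,…,r}` and `r` even.  A pair `(a,j)` over `(ℤ/N)^r` satisfies
`2a = 0`, `2j = 0` and `a = −u_Δ + u·j` if and only if all entries of `j` lie in `{0, n}`
and `a = −u_Δ + u·j` (in particular `2a = 0` is then automatic), and the set of such
pairs has exactly `2^r` elements. -/
theorem ribbon_pairs_card (n N r : ℕ) (hn : 2 ≤ n) (hN : N = 2 * n) (hr : 2 ≤ r)
    (J : Finset ℕ) (hJ : J = Finset.Icc 1 r) (hrE : Even r)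
    (U : Matrix (Fin r) (Fin r) (ZMod N))
    (hU : U = Matrix.of fun (i k : Fin r) => ((uEntry n r J (i.1 + 1) (k.1 + 1) : ℤ) : ZMod N))
    (uD : Fin r → ZMod N) (huD : uD = fun i => U i i) :
    (∀ a j : Fin r → ZMod N,
        (2 • a = 0 ∧ 2 • j = 0 ∧ a = -uD + U.mulVec j) ↔
        ((∀ i, j i = 0 ∨ j i = (n : ZMod N)) ∧ a = -uD + U.mulVec j)) ∧
    Nat.card {p : (Fin r → ZMod N) × (Fin r → ZMod N) //
        2 • p.1 = 0 ∧ 2 • p.2 = 0 ∧ p.1 = -uD + U.mulVec p.2} = 2 ^ r := by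
  subst hN
  have hn1 : 1 ≤ n := by omega
  -- diagonal entries are n
  have hdiag : ∀ i : Fin r, uD i = (n : ZMod (2 * n)) := by
    intro i
    have hmem : i.1 + 1 ∈ Finset.Icc 1 r := by
      simp [Finset.mem_Icc]
    simp [huD, hU, uEntry, hJ, hmem]
  have hzn : (2 : ℕ) • (n : ZMod (2 * n)) = 0 :=
    (two_nsmul_eq_zero_iff n hn1 _).mpr (Or.inr rfl)
  -- 2 • uD = 0
  have huD0 : (2 : ℕ) • uD = 0 := by
    funext i
    simp only [Pi.smul_apply, Pi.zero_apply, hdiag i]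
    exact hzn
  -- nsmul as cast smul
  have hiff : ∀ a j : Fin r → ZMod (2 * n),
      (2 • a = 0 ∧ 2 • j = 0 ∧ a = -uD + U.mulVec j) ↔
      ((∀ i, j i = 0 ∨ j i = (n : ZMod (2 * n))) ∧ a = -uD + U.mulVec j) := by
    intro a j
    constructor
    · rintro ⟨h1, h2, h3⟩
      refine ⟨fun i => ?_, h3⟩
      have := congrFun h2 i
      simp only [Pi.smul_apply, Pi.zero_apply] at this
      exact (two_nsmul_eq_zero_iff n hn1 (j i)).mp this
    · rintro ⟨hj, h3⟩
      have h2 : (2 : ℕ) • j = 0 := by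
        funext i
        simp only [Pi.smul_apply, Pi.zero_apply]
        exact (two_nsmul_eq_zero_iff n hn1 (j i)).mpr (hj i)
      refine ⟨?_, h2, h3⟩
      subst h3
      have hcast : ∀ v : Fin r → ZMod (2 * n), (2 : ℕ) • v = ((2 : ℕ) : ZMod (2 * n)) • v :=
        fun v => (Nat.cast_smul_eq_nsmul _ _ _).symm
      rw [smul_add, smul_neg, huD0, neg_zero, zero_add, hcast,
        ← Matrix.mulVec_smul, ← hcast, h2, Matrix.mulVec_zero]
  refine ⟨hiff, ?_⟩
  -- bijection with vectors with entries in {0, n}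
  have e1 : {p : (Fin r → ZMod (2 * n)) × (Fin r → ZMod (2 * n)) //
        2 • p.1 = 0 ∧ 2 • p.2 = 0 ∧ p.1 = -uD + U.mulVec p.2} ≃
      {j : Fin r → ZMod (2 * n) // ∀ i, j i = 0 ∨ j i = (n : ZMod (2 * n))} :=
    { toFun := fun p => ⟨p.1.2, ((hiff p.1.1 p.1.2).mp p.2).1⟩
      invFun := fun j => ⟨(-uD + U.mulVec j.1, j.1), (hiff _ _).mpr ⟨j.2, rfl⟩⟩
      left_inv := fun p => by
        have h := ((hiff p.1.1 p.1.2).mp p.2).2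
        apply Subtype.ext
        exact Prod.ext h.symm rfl
      right_inv := fun j => rfl }
  have e2 : {j : Fin r → ZMod (2 * n) // ∀ i, j i = 0 ∨ j i = (n : ZMod (2 * n))} ≃
      ∀ _ : Fin r, {x : ZMod (2 * n) // x = 0 ∨ x = (n : ZMod (2 * n))} :=
    Equiv.subtypePiEquivPi (p := fun (_ : Fin r) (x : ZMod (2 * n)) => x = 0 ∨ x = (n : ZMod (2 * n)))
  have hne : (0 : ZMod (2 * n)) ≠ (n : ZMod (2 * n)) := by
    intro h
    have hd : (2 * n) ∣ n := (ZMod.natCast_eq_zero_iff n (2 * n)).mp h.symm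
    have := Nat.le_of_dvd (by omega) hd
    omega
  have e3 : {x : ZMod (2 * n) // x = 0 ∨ x = (n : ZMod (2 * n))} ≃ Bool :=
    { toFun := fun x => decide (x.1 = (n : ZMod (2 * n)))
      invFun := fun b => if b then ⟨(n : ZMod (2 * n)), Or.inr rfl⟩ else ⟨0, Or.inl rfl⟩
      left_inv := by
        rintro ⟨x, hx | hx⟩ <;> subst hx <;> simp [hne, Ne.symm hne]
      right_inv := by
        rintro (_ | _) <;> simp [hne, Ne.symm hne] }
  rw [Nat.card_congr (e1.trans (e2.trans (Equiv.piCongrRight fun _ => e3)))]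
  simp [Nat.card_eq_fintype_card]
end
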